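/- arXiv:1406.4022 — 7 statements merged into one kernel-verified Lean document; each statement's English description precedes it below -/
import Mathlib

section
/- For positive integers n and j with j ≤ n, the sum over k from j to n of [n choose k]_q (-1)^k q^{binom(k,2)} equals [n-1 choose j-1]_q (-1)^j q^{binom(j,2)}, where binom(k,2)=k(k-1)/2. -/
/-- The Gaussian `q`-binomial coefficient `[n choose k]_q = ∏_{i=1}^k (1-q^{n-k+i})/(1-q^i)`. -/
noncomputable def qbinom (q : ℂ) (n k : ℕ) : ℂ :=
  ∏ i ∈ Finset.range k, (1 - q ^ (n - k + 1 + i)) / (1 - q ^ (1 + i))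

/-!
By the Pascal recurrence `[n, k] = [n-1, k-1] + q^k [n-1, k]` and `q^k q^(k choose 2) = q^(k+1 choose 2)`,
the `k`-th summand is `b k - b (k+1)` with `b k = [n-1, k-1] (-1)^k q^(k choose 2)` for `k < n`.
At `k = n` the recurrence fails (the product formula does not give `[n-1, n] = 0`), but the last
summand is `b n` because `[n, n] = [n-1, n-1] = 1`. The sum therefore telescopes to `b j`.
-/

open Finset

lemma qbinom_self (q : ℂ) (m : ℕ) (hq : ∀ i, 1 ≤ i → i ≤ m → q ^ i ≠ 1) :
    qbinom q m m = 1 := by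
  refine prod_eq_one fun i hi ↦ ?_
  rw [Nat.sub_self, zero_add]
  exact div_self (sub_ne_zero.mpr fun h ↦ hq (1 + i) (by omega) (by have := mem_range.mp hi; omega) h.symm)

lemma qbinom_succ_succ (q : ℂ) {m t : ℕ} (ht : t ≤ m) :
    qbinom q (m + 1) (t + 1) = qbinom q m t * ((1 - q ^ (m + 1)) / (1 - q ^ (t + 1))) := by
  rw [qbinom, prod_range_succ, Nat.add_sub_add_right, qbinom,
    show m - t + 1 + t = m + 1 by omega, add_comm 1 t]

lemma qbinom_succ_right (q : ℂ) {m t : ℕ} (ht : t < m) :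
    qbinom q m (t + 1) = qbinom q m t * ((1 - q ^ (m - t)) / (1 - q ^ (t + 1))) := by
  simp only [qbinom, prod_div_distrib]
  rw [prod_range_succ' (fun i ↦ 1 - q ^ (m - (t + 1) + 1 + i)), prod_range_succ, mul_div_mul_comm]
  congr 4
  · exact funext fun i ↦ by congr 2; omega
  all_goals omega

lemma qbinom_succ_succ_eq_add (q : ℂ) {m t : ℕ} (ht : t < m) (hq : q ^ (t + 1) ≠ 1) :
    qbinom q (m + 1) (t + 1) = qbinom q m t + q ^ (t + 1) * qbinom q m (t + 1) := by
  have hden : 1 - q ^ (t + 1) ≠ 0 := sub_ne_zero.mpr hq.symm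
  have hpow : q ^ (m + 1) = q ^ (t + 1) * q ^ (m - t) := by rw [← pow_add]; congr 1; omega
  rw [qbinom_succ_succ q ht.le, qbinom_succ_right q ht, hpow]
  field_simp
  ring

lemma qbinom_mul_sign_mul_pow_choose_eq_sub (q : ℂ) {m t : ℕ} (ht : t < m) (hq : q ^ (t + 1) ≠ 1) :
    qbinom q (m + 1) (t + 1) * (-1) ^ (t + 1) * q ^ (t + 1).choose 2 =
      qbinom q m t * (-1) ^ (t + 1) * q ^ (t + 1).choose 2
        - qbinom q m (t + 1) * (-1) ^ (t + 2) * q ^ (t + 2).choose 2 := by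
  rw [qbinom_succ_succ_eq_add q ht hq, Nat.choose_succ_succ' (t + 1), Nat.choose_one_right]
  ring

theorem stmt_1 (n j : ℕ) (hj : 1 ≤ j) (hjn : j ≤ n) (q : ℂ)
    (hq : ∀ i, 1 ≤ i → i ≤ n → q ^ i ≠ 1) :
    ∑ k ∈ Finset.Icc j n, qbinom q n k * (-1) ^ k * q ^ (Nat.choose k 2)
      = qbinom q (n - 1) (j - 1) * (-1) ^ j * q ^ (Nat.choose j 2) := by
  set b : ℕ → ℂ := fun k ↦ qbinom q (n - 1) (k - 1) * (-1) ^ k * q ^ k.choose 2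
  have hterm : ∀ k ∈ Ico j n, qbinom q n k * (-1) ^ k * q ^ k.choose 2 = b k - b (k + 1) := by
    intro k hk
    rw [mem_Ico] at hk
    obtain ⟨t, rfl⟩ : ∃ t, k = t + 1 := ⟨k - 1, by omega⟩
    obtain ⟨m, rfl⟩ : ∃ m, n = m + 1 := ⟨n - 1, by omega⟩
    exact qbinom_mul_sign_mul_pow_choose_eq_sub q (by omega) (hq _ (by omega) (by omega))
  have htop : qbinom q n n * (-1) ^ n * q ^ n.choose 2 = b n := by
    simp only [b]
    rw [qbinom_self q n hq, qbinom_self q (n - 1) fun i h1 h2 ↦ hq i h1 (by omega)]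
  calc ∑ k ∈ Icc j n, qbinom q n k * (-1) ^ k * q ^ k.choose 2
      = ∑ k ∈ Ico j n, (b k - b (k + 1)) + b n := by
        rw [← Ico_add_one_right_eq_Icc, sum_Ico_succ_top hjn, sum_congr rfl hterm, htop]
    _ = b j := by
        simp only [← neg_sub (b (_ + 1)), sum_neg_distrib, sum_Ico_sub b hjn]
        ring
end

section
/- Let {a_n} and {b_n} satisfy b_n = ∑_{k=1}^n [n choose k]_q (-1)^k q^{binom(k,2)} a_k. Then for any positive integer r, ∑_{k=1}^n [n choose k]_q (-1)^k q^{binom(k,2)-nk} ∑_{1≤k_1≤⋯≤k_r=k} (∏_{i=1}^r q^{k_i}/[k_i]_q)·b_{k_1} = ∑_{k=1}^n q^{(r-1)k} a_k / [k]_q^r. -/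
/-
Write `T_x(c)_n = ∑_{k=1}^n [n choose k]_q (-1)^k q^(k choose 2) x^k c_k`, so that `b = T_1 a`
and the left-hand side of the theorem is `T_x` at `x = q^(-n)` applied to the inner chain sums.
Reindexing `k = j + t` turns the composite kernel of `T_{q/q^n} ∘ T_1` into the q-binomial theorem
evaluated at a root of one of its factors, which gives the inversion `T_{q/q^n}(T_1 a)_n = a_n`.

Peeling off the smallest index `k_1` of a chain replaces `b` by `b'_m = ∑_{j ≤ m} q^j b_j / [j]_q`,
and a q-hockey-stick identity shows `b' = T_1 a'` with `a'_k = q^k a_k / [k]_q`; this is the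
induction on `r`. For `r = 1`, the q-analogue `∑_{k ≥ j} (-1)^k q^(k choose 2) [m choose k]_q
= (-1)^j q^(j choose 2) [m-1 choose j-1]_q` of an alternating tail sum shows
`b_m / [m]_q = T_1(∑_{j ≤ ·} a_j / [j]_q)_m`, and the inversion concludes.
-/

open scoped Classical

/-- The `q`-integer `[k]_q = (1-q^k)/(1-q)`. -/
noncomputable def qint (q : ℂ) (k : ℕ) : ℂ := (1 - q ^ k) / (1 - q)

open Finset

theorem Nat.choose_two_add (j t : ℕ) : (j + t).choose 2 = j.choose 2 + t.choose 2 + j * t := by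
  induction t with
  | zero => simp
  | succ t ih =>
    simp only [← add_assoc, Nat.choose_succ_succ', Nat.choose_one_right, ih]
    ring

theorem Nat.two_mul_choose_two_add_self (n : ℕ) : 2 * n.choose 2 + n = n * n := by
  induction n with
  | zero => rfl
  | succ n ih =>
    rw [Nat.choose_succ_succ', Nat.choose_one_right]
    linarith

theorem Finset.sum_Icc_sum_Icc_comm {M : Type*} [AddCommMonoid M] (f : ℕ → ℕ → M) (n : ℕ) :
    ∑ k ∈ Icc 1 n, ∑ j ∈ Icc 1 k, f k j = ∑ j ∈ Icc 1 n, ∑ k ∈ Icc j n, f k j :=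
  sum_comm' fun k j => by simp only [mem_Icc]; omega

noncomputable def qfact (q : ℂ) (n : ℕ) : ℂ := ∏ i ∈ range n, (1 - q ^ (i + 1))

/-- Unlike `qbinom`, which is junk for `k > n`, this vanishes there, so Pascal's rules hold for
all `k`. -/
noncomputable def qchoose (q : ℂ) (n k : ℕ) : ℂ :=
  if k ≤ n then qfact q n / (qfact q k * qfact q (n - k)) else 0

section QChoose

variable {q : ℂ} {m n k t j i : ℕ}

theorem qfact_zero : qfact q 0 = 1 := prod_range_zero _

theorem qfact_succ : qfact q (n + 1) = qfact q n * (1 - q ^ (n + 1)) := prod_range_succ _ _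

theorem qfact_ne_zero_of_le (h : qfact q n ≠ 0) (hk : k ≤ n) : qfact q k ≠ 0 := by
  rw [qfact, ← prod_range_mul_prod_Ico _ hk] at h
  exact left_ne_zero_of_mul h

theorem one_sub_pow_ne_zero (h : qfact q n ≠ 0) (hk : 1 ≤ k) (hkn : k ≤ n) : 1 - q ^ k ≠ 0 := by
  obtain ⟨k, rfl⟩ := Nat.exists_eq_add_of_le' hk
  exact right_ne_zero_of_mul (qfact_succ ▸ qfact_ne_zero_of_le h hkn)

theorem qint_ne_zero (h : qfact q n ≠ 0) (hk : 1 ≤ k) (hkn : k ≤ n) : qint q k ≠ 0 :=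
  div_ne_zero (one_sub_pow_ne_zero h hk hkn)
    (pow_one q ▸ one_sub_pow_ne_zero h le_rfl (hk.trans hkn))

theorem qfact_ne_zero (hq : ∀ i, 1 ≤ i → i ≤ n → q ^ i ≠ 1) : qfact q n ≠ 0 :=
  prod_ne_zero_iff.2 fun i hi => sub_ne_zero.2 fun h => hq (i + 1) (by omega)
    (by simp only [mem_range] at hi; omega) h.symm

theorem qbinom_eq_qchoose (h : qfact q n ≠ 0) (hk : k ≤ n) : qbinom q n k = qchoose q n k := by
  have hsplit : qfact q n = qfact q (n - k) * ∏ i ∈ range k, (1 - q ^ (n - k + 1 + i)) := by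
    rw [qfact, qfact, ← Nat.sub_add_cancel hk, prod_range_add, Nat.sub_add_cancel hk]
    congr 1
    exact prod_congr rfl fun i _ => by rw [add_right_comm]
  have hden : ∏ i ∈ range k, (1 - q ^ (1 + i)) = qfact q k := by simp only [qfact, add_comm 1]
  have hk0 := qfact_ne_zero_of_le h hk
  have hnk0 := qfact_ne_zero_of_le h (Nat.sub_le n k)
  rw [qbinom, qchoose, if_pos hk, prod_div_distrib, hden, hsplit]
  field_simp

theorem qchoose_of_lt (h : n < k) : qchoose q n k = 0 := if_neg (by omega)

theorem qchoose_self (h : qfact q n ≠ 0) : qchoose q n n = 1 := by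
  rw [qchoose, if_pos le_rfl, Nat.sub_self, qfact_zero, mul_one, div_self h]

theorem qchoose_zero_right (h : qfact q n ≠ 0) : qchoose q n 0 = 1 := by
  rw [qchoose, if_pos n.zero_le, Nat.sub_zero, qfact_zero, one_mul, div_self h]

theorem qchoose_succ_succ (h : qfact q (m + 1) ≠ 0) :
    qchoose q (m + 1) (t + 1) = qchoose q m (t + 1) + q ^ (m - t) * qchoose q m t := by
  rcases lt_trichotomy t m with ht | rfl | ht
  · obtain ⟨d, rfl⟩ := Nat.exists_eq_add_of_lt ht
    have ht1 : qfact q (t + 1) = qfact q t * (1 - q ^ (t + 1)) := qfact_succ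
    have hd1 : qfact q (d + 1) = qfact q d * (1 - q ^ (d + 1)) := qfact_succ
    have hm1 : qfact q (t + d + 1 + 1) = qfact q (t + d + 1) * (1 - q ^ (t + d + 1 + 1)) :=
      qfact_succ
    have h1 : qfact q t ≠ 0 := qfact_ne_zero_of_le h (by omega)
    have h2 : qfact q d ≠ 0 := qfact_ne_zero_of_le h (by omega)
    have h3 := one_sub_pow_ne_zero h (k := t + 1) (by omega) (by omega)
    have h4 := one_sub_pow_ne_zero h (k := d + 1) (by omega) (by omega)
    simp only [qchoose, if_pos (by omega : t + 1 ≤ t + d + 1 + 1),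
      if_pos (by omega : t + 1 ≤ t + d + 1), if_pos (by omega : t ≤ t + d + 1),
      show t + d + 1 + 1 - (t + 1) = d + 1 by omega, show t + d + 1 - (t + 1) = d by omega,
      show t + d + 1 - t = d + 1 by omega, ht1, hd1, hm1]
    field_simp
    ring
  · rw [qchoose_self h, qchoose_of_lt (Nat.lt_succ_self t), Nat.sub_self, pow_zero, one_mul,
      qchoose_self (qfact_ne_zero_of_le h t.le_succ), zero_add]
  · rw [qchoose_of_lt (by omega), qchoose_of_lt (by omega), qchoose_of_lt ht, mul_zero, add_zero]

theorem qchoose_succ_succ' (h : qfact q (m + 1) ≠ 0) :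
    qchoose q (m + 1) (t + 1) = q ^ (t + 1) * qchoose q m (t + 1) + qchoose q m t := by
  rcases lt_trichotomy t m with ht | rfl | ht
  · obtain ⟨d, rfl⟩ := Nat.exists_eq_add_of_lt ht
    have ht1 : qfact q (t + 1) = qfact q t * (1 - q ^ (t + 1)) := qfact_succ
    have hd1 : qfact q (d + 1) = qfact q d * (1 - q ^ (d + 1)) := qfact_succ
    have hm1 : qfact q (t + d + 1 + 1) = qfact q (t + d + 1) * (1 - q ^ (t + d + 1 + 1)) :=
      qfact_succ
    have h1 : qfact q t ≠ 0 := qfact_ne_zero_of_le h (by omega)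
    have h2 : qfact q d ≠ 0 := qfact_ne_zero_of_le h (by omega)
    have h3 := one_sub_pow_ne_zero h (k := t + 1) (by omega) (by omega)
    have h4 := one_sub_pow_ne_zero h (k := d + 1) (by omega) (by omega)
    simp only [qchoose, if_pos (by omega : t + 1 ≤ t + d + 1 + 1),
      if_pos (by omega : t + 1 ≤ t + d + 1), if_pos (by omega : t ≤ t + d + 1),
      show t + d + 1 + 1 - (t + 1) = d + 1 by omega, show t + d + 1 - (t + 1) = d by omega,
      show t + d + 1 - t = d + 1 by omega, ht1, hd1, hm1]
    field_simp
    ring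
  · rw [qchoose_self h, qchoose_of_lt (Nat.lt_succ_self t), mul_zero,
      qchoose_self (qfact_ne_zero_of_le h t.le_succ), zero_add]
  · rw [qchoose_of_lt (by omega), qchoose_of_lt (by omega), qchoose_of_lt ht, mul_zero, add_zero]

theorem qchoose_succ_mul_qint (h : qfact q (m + 1) ≠ 0) :
    qchoose q (m + 1) (k + 1) * qint q (k + 1) = qchoose q m k * qint q (m + 1) := by
  rcases le_or_gt k m with hk | hk
  · have h1 : qfact q k ≠ 0 := qfact_ne_zero_of_le h (by omega)
    have h2 : qfact q (m - k) ≠ 0 := qfact_ne_zero_of_le h (by omega)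
    have h3 := one_sub_pow_ne_zero h (k := k + 1) (by omega) (by omega)
    have h4 := one_sub_pow_ne_zero h (k := 1) le_rfl (by omega)
    rw [pow_one] at h4
    simp only [qchoose, qint, if_pos hk, if_pos (by omega : k + 1 ≤ m + 1), Nat.add_sub_add_right,
      qfact_succ]
    field_simp
  · rw [qchoose_of_lt (by omega), qchoose_of_lt hk, zero_mul, zero_mul]

theorem qchoose_add_mul_qchoose (h : qfact q m ≠ 0) (hm : j + t ≤ m) :
    qchoose q m (j + t) * qchoose q (j + t) j = qchoose q m j * qchoose q (m - j) t := by
  have h1 : qfact q (j + t) ≠ 0 := qfact_ne_zero_of_le h hm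
  have h2 : qfact q (m - j) ≠ 0 := qfact_ne_zero_of_le h (by omega)
  have h3 : qfact q (m - (j + t)) ≠ 0 := qfact_ne_zero_of_le h (by omega)
  have h4 : qfact q j ≠ 0 := qfact_ne_zero_of_le h (by omega)
  have h5 : qfact q t ≠ 0 := qfact_ne_zero_of_le h (by omega)
  simp only [qchoose, if_pos hm, if_pos (Nat.le_add_right j t), if_pos (by omega : j ≤ m),
    if_pos (by omega : t ≤ m - j), Nat.add_sub_cancel_left, Nat.sub_sub]
  field_simp

theorem sum_range_qchoose_eq_prod (h : qfact q m ≠ 0) (x : ℂ) :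
    ∑ t ∈ range (m + 1), (-1) ^ t * qchoose q m t * q ^ t.choose 2 * x ^ t =
      ∏ i ∈ range m, (1 - q ^ i * x) := by
  induction m generalizing x with
  | zero => simp [qchoose_self h]
  | succ m ih =>
    have hm : qfact q m ≠ 0 := qfact_ne_zero_of_le h m.le_succ
    set G : ℕ → ℂ := fun t => (-1) ^ t * qchoose q m t * q ^ t.choose 2 * (q * x) ^ t
    have hG : ∑ t ∈ range (m + 1), G (t + 1) + 1 = ∑ t ∈ range (m + 1), G t := by
      have hlast : G (m + 1) = 0 := by simp only [G, qchoose_of_lt m.lt_succ_self]; ring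
      have h0 : G 0 = 1 := by simp [G, qchoose_zero_right hm]
      rw [← h0, ← sum_range_succ', sum_range_succ, hlast, add_zero]
    have hterm : ∀ t,
        (-1) ^ (t + 1) * qchoose q (m + 1) (t + 1) * q ^ (t + 1).choose 2 * x ^ (t + 1)
          = G (t + 1) - x * G t := by
      intro t
      simp only [G, qchoose_succ_succ' h, Nat.choose_succ_succ', Nat.choose_one_right]
      ring
    have hprod : ∏ i ∈ range (m + 1), (1 - q ^ i * x)
        = (∏ i ∈ range m, (1 - q ^ i * (q * x))) * (1 - x) := by
      rw [prod_range_succ']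
      simp only [pow_succ, pow_zero, one_mul, mul_assoc, mul_comm q]
    rw [hprod, ← ih hm, sum_range_succ', sum_congr rfl fun t _ => hterm t, sum_sub_distrib,
      ← mul_sum]
    simp only [pow_zero, Nat.choose_zero_succ, mul_one, qchoose_zero_right h]
    linear_combination hG

theorem sum_Icc_qchoose_mul_neg_one_pow (h : qfact q (m + 1) ≠ 0) (hi : i ≤ m) :
    ∑ k ∈ Icc (i + 1) (m + 1), qchoose q (m + 1) k * (-1) ^ k * q ^ k.choose 2
      = qchoose q m i * (-1) ^ (i + 1) * q ^ (i + 1).choose 2 := by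
  induction hi using Nat.decreasingInduction with
  | self =>
    rw [Icc_self, sum_singleton, qchoose_self h, qchoose_self (qfact_ne_zero_of_le h m.le_succ)]
  | of_succ i hi ih =>
    rw [← insert_Icc_add_one_left_eq_Icc (by omega), sum_insert (by simp), ih, qchoose_succ_succ' h,
      Nat.choose_succ_succ' (i + 1), Nat.choose_one_right]
    ring

theorem sum_Icc_pow_mul_qchoose_div_qint (h : qfact q (m + 1) ≠ 0) (hk : k ≤ m) :
    ∑ j ∈ Icc (k + 1) (m + 1), q ^ j * qchoose q j (k + 1) / qint q j
      = q ^ (k + 1) * qchoose q (m + 1) (k + 1) / qint q (k + 1) := by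
  induction m, hk using Nat.le_induction with
  | base => rw [Icc_self, sum_singleton]
  | succ m hk ih =>
    have hratio := qchoose_succ_mul_qint (k := k) h
    have hpow : q ^ (k + 1) * q ^ (m + 1 - k) = q ^ (m + 1 + 1) := by
      rw [← pow_add]; congr 1; omega
    have hqk := qint_ne_zero h (k := k + 1) (by omega) (by omega)
    have hqm := qint_ne_zero h (k := m + 1 + 1) (by omega) le_rfl
    have hlast : q ^ (m + 1 + 1) * qchoose q (m + 1 + 1) (k + 1) / qint q (m + 1 + 1)
        = q ^ (m + 1 + 1) * qchoose q (m + 1) k / qint q (k + 1) := by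
      rw [div_eq_div_iff hqm hqk]
      linear_combination q ^ (m + 1 + 1) * hratio
    rw [sum_Icc_succ_top (by omega), ih (qfact_ne_zero_of_le h (m + 1).le_succ), hlast,
      qchoose_succ_succ h, ← hpow]
    ring

end QChoose

noncomputable def qTransform (q x : ℂ) (a : ℕ → ℂ) (n : ℕ) : ℂ :=
  ∑ k ∈ Icc 1 n, qchoose q n k * (-1) ^ k * q ^ k.choose 2 * x ^ k * a k

section QTransform

variable {q x y : ℂ} {m n j : ℕ} {c c' : ℕ → ℂ}

theorem qTransform_congr (h : ∀ k ∈ Icc 1 n, c k = c' k) :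
    qTransform q x c n = qTransform q x c' n :=
  sum_congr rfl fun k hk => by rw [h k hk]

theorem qTransform_pow_mul : qTransform q x (fun k => y ^ k * c k) n = qTransform q (x * y) c n :=
  sum_congr rfl fun k _ => by rw [mul_pow]; ring

theorem sum_Icc_qchoose_mul_qchoose (h : qfact q n ≠ 0) (hj : j ≤ n) :
    ∑ k ∈ Icc j n,
        qchoose q n k * qchoose q k j * (-1) ^ (k + j) * q ^ (k.choose 2 + j.choose 2) * x ^ k
      = qchoose q n j * q ^ (2 * j.choose 2) * x ^ j *
          ∏ i ∈ range (n - j), (1 - q ^ i * (q ^ j * x)) := by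
  rw [← sum_range_qchoose_eq_prod (qfact_ne_zero_of_le h (Nat.sub_le n j)), mul_sum,
    ← Ico_add_one_right_eq_Icc, sum_Ico_eq_sum_range, show n + 1 - j = n - j + 1 by omega]
  refine sum_congr rfl fun t ht => ?_
  have hsign : (-1 : ℂ) ^ (j + t + j) = (-1) ^ t := by
    rw [show j + t + j = t + 2 * j by ring, pow_add, pow_mul]; norm_num
  rw [qchoose_add_mul_qchoose h (by simp only [mem_range] at ht; omega), hsign, Nat.choose_two_add]
  ring

theorem qTransform_inversion (hq0 : q ≠ 0) (h : qfact q n ≠ 0) (hn : 1 ≤ n) {a b : ℕ → ℂ}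
    (hb : ∀ m ≤ n, b m = qTransform q 1 a m) : qTransform q (q / q ^ n) b n = a n := by
  have hexpand : qTransform q (q / q ^ n) b n = ∑ j ∈ Icc 1 n, (∑ k ∈ Icc j n, qchoose q n k *
      qchoose q k j * (-1) ^ (k + j) * q ^ (k.choose 2 + j.choose 2) * (q / q ^ n) ^ k) * a j := by
    simp_rw [sum_mul]
    rw [qTransform, ← sum_Icc_sum_Icc_comm]
    refine sum_congr rfl fun k hk => ?_
    rw [hb k (mem_Icc.1 hk).2, qTransform, mul_sum]
    refine sum_congr rfl fun j _ => ?_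
    rw [one_pow, pow_add, pow_add]
    ring
  rw [hexpand, sum_eq_single_of_mem n (right_mem_Icc.2 hn)]
  · rw [sum_Icc_qchoose_mul_qchoose h le_rfl, qchoose_self h, Nat.sub_self, prod_range_zero,
      div_pow, ← pow_mul, one_mul, mul_div_assoc', ← pow_add, Nat.two_mul_choose_two_add_self,
      div_self (pow_ne_zero _ hq0), one_mul, one_mul]
  · intro j hj hjn
    have hjn' : j < n := lt_of_le_of_ne (mem_Icc.1 hj).2 hjn
    have hroot : q ^ (n - 1 - j) * (q ^ j * (q / q ^ n)) = 1 := by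
      rw [mul_div_assoc', mul_div_assoc', ← pow_succ, ← pow_add,
        show n - 1 - j + (j + 1) = n by omega, div_self (pow_ne_zero _ hq0)]
    rw [sum_Icc_qchoose_mul_qchoose h hjn'.le,
      prod_eq_zero (mem_range.2 (by omega : n - 1 - j < n - j)) (by rw [hroot, sub_self]), mul_zero,
      zero_mul]

theorem qTransform_one_sum_div_qint (h : qfact q m ≠ 0) (a : ℕ → ℂ) :
    qTransform q 1 (fun k => ∑ j ∈ Icc 1 k, a j / qint q j) m = qTransform q 1 a m / qint q m := by
  cases m with
  | zero => simp [qTransform]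
  | succ m =>
    simp only [qTransform, one_pow, mul_one, mul_sum, sum_div]
    rw [sum_Icc_sum_Icc_comm]
    refine sum_congr rfl fun j hj => ?_
    obtain ⟨i, rfl⟩ := Nat.exists_eq_add_of_le' (mem_Icc.1 hj).1
    have hi : i ≤ m := by have := (mem_Icc.1 hj).2; omega
    have htail := sum_Icc_qchoose_mul_neg_one_pow h hi
    have hratio := qchoose_succ_mul_qint (k := i) h
    have hqi := qint_ne_zero h (k := i + 1) (by omega) (by omega)
    have hqm := qint_ne_zero h (k := m + 1) (by omega) le_rfl
    rw [← sum_mul, htail]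
    field_simp
    linear_combination -q ^ (i + 1).choose 2 * a (i + 1) * hratio

theorem sum_Icc_pow_mul_qTransform_div_qint (h : qfact q m ≠ 0) (a : ℕ → ℂ) :
    ∑ j ∈ Icc 1 m, q ^ j * qTransform q 1 a j / qint q j
      = qTransform q 1 (fun k => q ^ k * a k / qint q k) m := by
  cases m with
  | zero => simp [qTransform]
  | succ m =>
    have hexpand : ∀ j, q ^ j * qTransform q 1 a j / qint q j = ∑ k ∈ Icc 1 j,
        q ^ j * qchoose q j k / qint q j * ((-1) ^ k * q ^ k.choose 2 * a k) := fun j => by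
      rw [qTransform, mul_sum, sum_div]
      exact sum_congr rfl fun k _ => by ring
    simp only [hexpand]
    rw [sum_Icc_sum_Icc_comm, qTransform]
    refine sum_congr rfl fun k hk => ?_
    obtain ⟨i, rfl⟩ := Nat.exists_eq_add_of_le' (mem_Icc.1 hk).1
    rw [← sum_mul, sum_Icc_pow_mul_qchoose_div_qint h (by have := (mem_Icc.1 hk).2; omega)]
    ring

end QTransform

def monotoneChains (n s k : ℕ) : Finset (Fin (s + 1) → ℕ) :=
  (Fintype.piFinset fun _ => Icc 1 n).filter fun f => Monotone f ∧ f (Fin.last s) = k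

/-- The inner sum of the theorem for `r = s + 1`: chains `k₁ ≤ ⋯ ≤ k_{s+1} = k` in `[1, n]`. -/
noncomputable def chainSum (q : ℂ) (b : ℕ → ℂ) (n s k : ℕ) : ℂ :=
  ∑ f ∈ monotoneChains n s k, (∏ i, q ^ f i / qint q (f i)) * b (f 0)

section Chains
variable {q : ℂ} {b : ℕ → ℂ} {n s k : ℕ}

theorem cons_mem_monotoneChains {j : ℕ} {g : Fin (s + 1) → ℕ} :
    (Fin.cons j g : Fin (s + 2) → ℕ) ∈ monotoneChains n (s + 1) k ↔
      g ∈ monotoneChains n s k ∧ j ∈ Icc 1 (g 0) := by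
  have hpi : (Fin.cons j g : Fin (s + 2) → ℕ) ∈ Fintype.piFinset (fun _ => Icc 1 n) ↔
      j ∈ Icc 1 n ∧ g ∈ Fintype.piFinset (fun _ => Icc 1 n) := by
    simp only [Fintype.mem_piFinset, Fin.forall_fin_succ, Fin.cons_zero, Fin.cons_succ]
  have hmono : Monotone (Fin.cons j g : Fin (s + 2) → ℕ) ↔ j ≤ g 0 ∧ Monotone g := monotone_vecCons
  simp only [monotoneChains, mem_filter, hpi, hmono, Fin.cons_last, mem_Icc]
  constructor
  · rintro ⟨⟨hj, hg⟩, ⟨hjg, hmg⟩, hlast⟩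
    exact ⟨⟨hg, hmg, hlast⟩, hj.1, hjg⟩
  · rintro ⟨⟨hg, hmg, hlast⟩, hj, hjg⟩
    exact ⟨⟨⟨hj, hjg.trans (mem_Icc.1 (Fintype.mem_piFinset.1 hg 0)).2⟩, hg⟩, ⟨hjg, hmg⟩, hlast⟩

theorem chainSum_zero (hk : k ∈ Icc 1 n) : chainSum q b n 0 k = q ^ k * (b k / qint q k) := by
  have hchains : monotoneChains n 0 k = {fun _ => k} := by
    ext f
    simp only [monotoneChains, mem_filter, Fintype.mem_piFinset, mem_singleton]
    constructor
    · rintro ⟨-, -, hf⟩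
      exact funext fun i => Fin.fin_one_eq_zero i ▸ hf
    · rintro rfl
      exact ⟨fun _ => hk, monotone_const, rfl⟩
  rw [chainSum, hchains, sum_singleton, Fin.prod_univ_one]
  ring

theorem chainSum_succ :
    chainSum q b n (s + 1) = chainSum q (fun m => ∑ j ∈ Icc 1 m, q ^ j * b j / qint q j) n s := by
  funext k
  simp only [chainSum, mul_sum]
  rw [sum_sigma']
  refine sum_nbij' (fun f => ⟨Fin.tail f, f 0⟩) (fun p => Fin.cons p.2 p.1) ?_ ?_ ?_ ?_ ?_
  · intro f hf
    rw [← Fin.cons_self_tail f, cons_mem_monotoneChains] at hf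
    exact mem_sigma.2 hf
  · rintro ⟨g, j⟩ hp
    exact cons_mem_monotoneChains.2 (mem_sigma.1 hp)
  · intro f _
    exact Fin.cons_self_tail f
  · rintro ⟨g, j⟩ _
    simp only [Fin.tail_cons, Fin.cons_zero]
  · intro f _
    rw [Fin.prod_univ_succ]
    simp only [Fin.tail]
    ring

end Chains

theorem qTransform_chainSum {q : ℂ} {n : ℕ} (hq0 : q ≠ 0) (h : qfact q n ≠ 0) (hn : 1 ≤ n)
    (s : ℕ) {a b : ℕ → ℂ} (hb : ∀ m ≤ n, b m = qTransform q 1 a m) :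
    qTransform q (q ^ n)⁻¹ (chainSum q b n s) n
      = ∑ k ∈ Icc 1 n, q ^ (s * k) * a k / qint q k ^ (s + 1) := by
  induction s generalizing a b with
  | zero =>
    rw [qTransform_congr fun k hk => chainSum_zero hk, qTransform_pow_mul, inv_mul_eq_div,
      qTransform_inversion (a := fun m => ∑ k ∈ Icc 1 m, a k / qint q k) hq0 h hn fun m hm => by
        rw [qTransform_one_sum_div_qint (qfact_ne_zero_of_le h hm), hb m hm]]
    simp
  | succ s ih =>
    have hb' : ∀ m ≤ n, ∑ j ∈ Icc 1 m, q ^ j * b j / qint q j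
        = qTransform q 1 (fun k => q ^ k * a k / qint q k) m := fun m hm => by
      rw [← sum_Icc_pow_mul_qTransform_div_qint (qfact_ne_zero_of_le h hm)]
      exact sum_congr rfl fun j hj => by rw [hb j ((mem_Icc.1 hj).2.trans hm)]
    rw [chainSum_succ, ih hb']
    refine sum_congr rfl fun k _ => ?_
    ring

theorem stmt_4 (q : ℂ) (a b : ℕ → ℂ)
    (hb : ∀ m : ℕ, b m = ∑ k ∈ Finset.Icc 1 m,
      qbinom q m k * (-1) ^ k * q ^ (Nat.choose k 2) * a k)
    (n r : ℕ) (hn : 1 ≤ n) (hr : 1 ≤ r) (hq0 : q ≠ 0)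
    (hq : ∀ i, 1 ≤ i → i ≤ n → q ^ i ≠ 1) :
    ∑ k ∈ Finset.Icc 1 n,
        qbinom q n k * (-1) ^ k * q ^ ((Nat.choose k 2 : ℤ) - (n : ℤ) * k) *
          ∑ f ∈ (Fintype.piFinset fun _ : Fin r => Finset.Icc 1 n).filter
            (fun f => Monotone f ∧ f ⟨r - 1, by omega⟩ = k),
            (∏ i : Fin r, q ^ (f i) / qint q (f i)) * b (f ⟨0, by omega⟩)
      = ∑ k ∈ Finset.Icc 1 n, q ^ ((r - 1) * k) * a k / (qint q k) ^ r := by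
  obtain ⟨s, rfl⟩ : ∃ s, r = s + 1 := ⟨r - 1, by omega⟩
  have h : qfact q n ≠ 0 := qfact_ne_zero hq
  have hb' : ∀ m ≤ n, b m = qTransform q 1 a m := fun m hm => by
    rw [hb m, qTransform]
    refine sum_congr rfl fun k hk => ?_
    rw [qbinom_eq_qchoose (qfact_ne_zero_of_le h hm) (mem_Icc.1 hk).2, one_pow, mul_one]
  convert qTransform_chainSum hq0 h hn s hb' using 1
  · refine sum_congr rfl fun k hk => ?_
    rw [qbinom_eq_qchoose h (mem_Icc.1 hk).2, zpow_sub₀ hq0, zpow_mul, zpow_natCast, zpow_natCast,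
      zpow_natCast, div_eq_mul_inv, ← inv_pow, ← mul_assoc]
    rfl
  · rw [Nat.add_sub_cancel]
end

section
/- Let p be a prime and s_1,…,s_l, t_1,…,t_l be non-negative integers with each s_j ≥ 1. Then modulo [p]_q, the multiple q-harmonic sum H_{p-1}^q(s_1,…,s_l; t_1,…,t_l) = ∑_{1≤k_1<⋯<k_l≤p-1} q^{t_1k_1+⋯+t_lk_l}/([k_1]_q^{s_1}⋯[k_l]_q^{s_l}) is congruent to (-1)^{s_1+⋯+s_l} H_{p-1}^q(s_l,…,s_1; s_l-t_l,…,s_1-t_1). -/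
/-!
At a root of unity `ζ` with `ζ ^ p = 1` we have `[p - a]_ζ = -(ζ ^ a)⁻¹ [a]_ζ` and
`ζ ^ ((b - t)(p - a)) = ζ ^ (t a) (ζ ^ a)⁻¹ ^ b`, so the summand of weight `(b, b - t)` at `p - a`
is `(-1) ^ b` times the summand of weight `(b, t)` at `a`. The substitution
`(k_1, …, k_l) ↦ (p - k_l, …, p - k_1)` permutes the strictly increasing tuples in `[1, p - 1]`,
and turns the reversed sum into `(-1) ^ (s_1 + ⋯ + s_l)` times the original one.
-/

open scoped Classical

/-- The multiple `q`-harmonic sum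
`H_n^q(s_0,…,s_{l-1}; t_0,…,t_{l-1}) = ∑_{1≤k_0<⋯<k_{l-1}≤n} ∏_i q^{t_i k_i}/[k_i]_q^{s_i}`,
with integer exponent weights `t`. -/
noncomputable def qMHS (q : ℂ) (n l : ℕ) (s : ℕ → ℕ) (t : ℕ → ℤ) : ℂ :=
  ∑ k ∈ (Fintype.piFinset fun _ : Fin l => Finset.Icc 1 n).filter
      (fun k => StrictMono k),
    ∏ i : Fin l, q ^ (t i.val * (k i : ℤ)) / (qint q (k i)) ^ (s i.val)

section RootOfUnity

variable {ζ : ℂ} {n a : ℕ}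

theorem qint_sub_of_pow_eq_one (hζ : ζ ^ n = 1) (ha : a ≤ n) :
    qint ζ (n - a) = -(ζ ^ a)⁻¹ * qint ζ a := by
  have hmul : ζ ^ (n - a) * ζ ^ a = 1 := by rw [← pow_add, Nat.sub_add_cancel ha, hζ]
  have hζa : ζ ^ a ≠ 0 := right_ne_zero_of_mul_eq_one hmul
  rw [qint, qint, eq_inv_of_mul_eq_one_left hmul]
  field_simp
  ring

theorem zpow_div_qint_pow_sub_of_pow_eq_one (hζ : ζ ^ n = 1) (ha : a < n) (b : ℕ) (t : ℤ) :
    ζ ^ (((b : ℤ) - t) * ((n - a : ℕ) : ℤ)) / qint ζ (n - a) ^ b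
      = (-1) ^ b * (ζ ^ (t * a) / qint ζ a ^ b) := by
  have hζ0 : ζ ≠ 0 := ne_zero_pow (by omega) (hζ ▸ one_ne_zero)
  have hζa : ζ ^ a ≠ 0 := pow_ne_zero _ hζ0
  have hexp : ζ ^ (((b : ℤ) - t) * ((n - a : ℕ) : ℤ)) = ζ ^ (t * a) * ((ζ ^ a)⁻¹) ^ b := by
    have hζn : ζ ^ (n : ℤ) = 1 := by rw [zpow_natCast, hζ]
    have hsplit : ((b : ℤ) - t) * ((n - a : ℕ) : ℤ) = n * (b - t) + (t * a + -(b * a)) := by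
      push_cast [Nat.cast_sub ha.le]; ring
    rw [hsplit, zpow_add₀ hζ0, zpow_mul, hζn, one_zpow, one_mul, zpow_add₀ hζ0, zpow_neg,
      inv_pow, ← pow_mul, ← zpow_natCast, mul_comm a]
    push_cast
    rfl
  have hsign : ((-1 : ℂ) ^ b)⁻¹ = (-1) ^ b := by rw [← inv_pow, inv_neg_one]
  rw [hexp, qint_sub_of_pow_eq_one hζ ha.le, mul_pow, neg_pow, mul_comm ((-1 : ℂ) ^ b), mul_assoc,
    mul_comm (ζ ^ (t * a)), mul_div_mul_left _ _ (pow_ne_zero _ (inv_ne_zero hζa)),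
    div_mul_eq_div_div_swap, div_eq_mul_inv _ ((-1 : ℂ) ^ b), hsign, mul_comm]

end RootOfUnity

section Reflection

variable {n l : ℕ}

def tupleReflect (n : ℕ) (k : Fin l → ℕ) : Fin l → ℕ := fun i => n - k i.rev

theorem tupleReflect_mem {k : Fin l → ℕ}
    (hk : k ∈ (Fintype.piFinset fun _ : Fin l => Finset.Icc 1 (n - 1)).filter StrictMono) :
    tupleReflect n k ∈
      (Fintype.piFinset fun _ : Fin l => Finset.Icc 1 (n - 1)).filter StrictMono := by
  simp only [Finset.mem_filter, Fintype.mem_piFinset, Finset.mem_Icc] at hk ⊢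
  refine ⟨fun i => ?_, fun i j hij => ?_⟩
  · have := hk.1 i.rev
    simp only [tupleReflect]
    omega
  · have hlt := hk.2 (Fin.rev_lt_rev.mpr hij)
    have := hk.1 j.rev
    simp only [tupleReflect]
    omega

theorem tupleReflect_tupleReflect {k : Fin l → ℕ} (hk : ∀ i, k i ≤ n) :
    tupleReflect n (tupleReflect n k) = k := by
  funext i
  have := hk i
  simp only [tupleReflect, Fin.rev_rev]
  omega

theorem prod_tupleReflect_of_pow_eq_one {ζ : ℂ} (hζ : ζ ^ n = 1) (s : ℕ → ℕ) (t : ℕ → ℤ)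
    {k : Fin l → ℕ} (hk : ∀ i, k i < n) :
    ∏ i : Fin l, ζ ^ (((s (l - 1 - i) : ℤ) - t (l - 1 - i)) * (tupleReflect n k i : ℤ)) /
        qint ζ (tupleReflect n k i) ^ s (l - 1 - i)
      = (-1) ^ (∑ i ∈ Finset.range l, s i) *
        ∏ i : Fin l, ζ ^ (t i * (k i : ℤ)) / qint ζ (k i) ^ s i := by
  have hrev : ∀ i : Fin l, l - 1 - (i : ℕ) = i.rev := fun i => by rw [Fin.val_rev]; omega
  rw [← Fin.sum_univ_eq_sum_range, ← Finset.prod_pow_eq_pow_sum, ← Finset.prod_mul_distrib]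
  refine Fintype.prod_equiv Fin.revPerm _ _ fun i => ?_
  simp only [tupleReflect, hrev, Fin.revPerm_apply]
  exact zpow_div_qint_pow_sub_of_pow_eq_one hζ (hk i.rev) _ _

end Reflection

/-- Congruence modulo `[p]_q` is expressed as equality at every primitive `p`-th root of unity. -/
theorem stmt_10_general (p : ℕ) (l : ℕ) (s : ℕ → ℕ) (t : ℕ → ℤ)
    (ζ : ℂ) (hζ : IsPrimitiveRoot ζ p) :
    qMHS ζ (p - 1) l s t
      = (-1) ^ (∑ i ∈ Finset.range l, s i) *
        qMHS ζ (p - 1) l (fun i => s (l - 1 - i))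
          (fun i => (s (l - 1 - i) : ℤ) - t (l - 1 - i)) := by
  have hbound : ∀ k ∈ (Fintype.piFinset fun _ : Fin l => Finset.Icc 1 (p - 1)).filter StrictMono,
      ∀ i, k i < p := fun k hk i => by
    have := Finset.mem_Icc.mp (Fintype.mem_piFinset.mp (Finset.mem_filter.mp hk).1 i)
    omega
  rw [qMHS, qMHS, Finset.mul_sum]
  have hinv : ∀ k ∈ (Fintype.piFinset fun _ : Fin l => Finset.Icc 1 (p - 1)).filter StrictMono,
      tupleReflect p (tupleReflect p k) = k := fun k hk =>
    tupleReflect_tupleReflect fun i => (hbound k hk i).le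
  refine Finset.sum_nbij' (tupleReflect p) (tupleReflect p) (fun k hk => tupleReflect_mem hk)
    (fun k hk => tupleReflect_mem hk) hinv hinv fun k hk => ?_
  rw [prod_tupleReflect_of_pow_eq_one hζ.pow_eq_one s t (hbound k hk), ← mul_assoc, ← mul_pow]
  norm_num

/-- Reversal congruence `H_{p-1}^q(s;t) ≡ (-1)^{w(s)} H_{p-1}^q(s̄; s̄ - t̄) (mod [p]_q)`,
expressed as an equality at any primitive `p`-th root of unity `ζ`. -/
theorem stmt_10 (p : ℕ) (hp : p.Prime) (l : ℕ) (s : ℕ → ℕ) (t : ℕ → ℤ)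
    (hs : ∀ i < l, 1 ≤ s i) (ht : ∀ i < l, 0 ≤ t i)
    (ζ : ℂ) (hζ : IsPrimitiveRoot ζ p) :
    qMHS ζ (p - 1) l s t
      = (-1) ^ (∑ i ∈ Finset.range l, s i) *
        qMHS ζ (p - 1) l (fun i => s (l - 1 - i))
          (fun i => (s (l - 1 - i) : ℤ) - t (l - 1 - i)) :=
  stmt_10_general p l s t ζ hζ
end

section
/- For any integer t ≥ 1 and any prime p > t, the multiple q-harmonic sum H_{p-1}^q({2}^t) = ∑_{1≤k_1<⋯<k_t≤p-1} q^{k_1+⋯+k_t}/([k_1]_q^2 ⋯ [k_t]_q^2) satisfies H_{p-1}^q({2}^t) ≡ (-1)^t · binom(p+t, 2t+1) · (1-q)^{2t} / (p(t+1)) modulo [p]_q. -/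
open scoped Classical

/-- The homogeneous multiple `q`-harmonic sum
`H_n^q({2}^t) = ∑_{1≤k_1<⋯<k_t≤n} q^{k_1+⋯+k_t}/([k_1]_q^2⋯[k_t]_q^2)`. -/
noncomputable def qH2t (q : ℂ) (n t : ℕ) : ℂ :=
  ∑ k ∈ (Fintype.piFinset fun _ : Fin t => Finset.Icc 1 n).filter
      (fun k => StrictMono k),
    ∏ i : Fin t, q ^ (k i) / (qint q (k i)) ^ 2

/-!
Put `b_k = ζ^k / (1 - ζ^k)^2`, so that `ζ^k / [k]_ζ^2 = (1 - ζ)^2 b_k` and `H_{p-1}^ζ({2}^t)` is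
`(1 - ζ)^{2t}` times the `t`-th elementary symmetric function of the `b_k`, i.e. the coefficient
of `x^t` in `P(x) = ∏_{k=1}^{p-1} (1 + b_k x)`. Substituting `x = 2 - w - w⁻¹ = -(w - 1)^2 / w`,
each factor `1 + b_k x` splits as `-ζ^k (w - ζ^k)(w - ζ^{-k}) / (w (1 - ζ^k)^2)`, and the products
over the nontrivial `p`-th roots of unity give `p^2 x P(x) = 2 - w^p - w^{-p}`. The right-hand
side is a polynomial in `x` whose coefficients are explicit binomial numbers, and comparing the
coefficients of `x^{t+1}` gives the formula.
-/

open Finset Polynomial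

theorem Nat.choose_add_two_add_choose (m r : ℕ) :
    (m + 2).choose (r + 2) + m.choose (r + 2) = 2 * (m + 1).choose (r + 2) + m.choose r := by
  have h₁ : (m + 2).choose (r + 2) = (m + 1).choose (r + 1) + (m + 1).choose (r + 2) :=
    Nat.choose_succ_succ' _ _
  have h₂ : (m + 1).choose (r + 1) = m.choose r + m.choose (r + 1) := Nat.choose_succ_succ' _ _
  have h₃ : (m + 1).choose (r + 2) = m.choose (r + 1) + m.choose (r + 2) :=
    Nat.choose_succ_succ' _ _
  omega

theorem Nat.add_one_mul_choose_add_choose (n t : ℕ) :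
    (t + 1) * ((n + t + 1).choose (2 * t + 2) + (n + t).choose (2 * t + 2))
      = n * (n + t).choose (2 * t + 1) := by
  rcases lt_or_ge n (t + 1) with hn | hn
  · simp [Nat.choose_eq_zero_of_lt (show n + t < 2 * t + 1 by omega),
      Nat.choose_eq_zero_of_lt (show n + t < 2 * t + 2 by omega),
      Nat.choose_eq_zero_of_lt (show n + t + 1 < 2 * t + 2 by omega)]
  · have h₁ := Nat.add_one_mul_choose_eq (n + t) (2 * t + 1)
    have h₂ := Nat.choose_succ_right_eq (n + t) (2 * t + 1)
    obtain ⟨m, rfl⟩ := Nat.exists_eq_add_of_le hn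
    rw [show t + 1 + m + t - (2 * t + 1) = m by omega] at h₂
    nlinarith

theorem Finset.prod_Icc_one_eq_prod_range {M : Type*} [CommMonoid M] (f : ℕ → M) (n : ℕ) :
    ∏ k ∈ Icc 1 n, f k = ∏ k ∈ range n, f (k + 1) := by
  rw [← Ico_add_one_right_eq_Icc, prod_Ico_eq_prod_range]
  simp [add_comm]

theorem Finset.prod_Icc_one_reflect {M : Type*} [CommMonoid M] (f : ℕ → M) (n : ℕ) :
    ∏ k ∈ Icc 1 n, f (n + 1 - k) = ∏ k ∈ Icc 1 n, f k := by
  refine prod_nbij' (fun k => n + 1 - k) (fun k => n + 1 - k) ?_ ?_ ?_ ?_ (fun _ _ => rfl) <;>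
    intro k hk <;> simp only [mem_Icc] at hk ⊢ <;> omega

theorem Finset.sum_filter_strictMono_prod_eq_sum_powersetCard {α β : Type*} [LinearOrder α]
    [CommSemiring β] (s : Finset α) (t : ℕ) (g : α → β) :
    ∑ k ∈ (Fintype.piFinset fun _ : Fin t => s).filter (fun k => StrictMono k),
        ∏ i, g (k i)
      = ∑ T ∈ s.powersetCard t, ∏ a ∈ T, g a := by
  refine sum_bij' (fun k _ => univ.image k)
    (fun T hT i => T.orderEmbOfFin (mem_powersetCard.mp hT).2 i) ?_ ?_ ?_ ?_ ?_
  · intro k hk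
    obtain ⟨hks, hmono⟩ := mem_filter.mp hk
    rw [mem_powersetCard, card_image_of_injective _ hmono.injective, card_univ, Fintype.card_fin]
    refine ⟨fun a ha => ?_, rfl⟩
    obtain ⟨i, -, rfl⟩ := mem_image.mp ha
    exact Fintype.mem_piFinset.mp hks i
  · intro T hT
    exact mem_filter.mpr ⟨Fintype.mem_piFinset.mpr fun i =>
      (mem_powersetCard.mp hT).1 (T.orderEmbOfFin_mem _ i), (T.orderEmbOfFin _).strictMono⟩
  · intro k hk
    have hmono := (mem_filter.mp hk).2
    exact funext fun i => (congrFun (orderEmbOfFin_unique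
      (by rw [card_image_of_injective _ hmono.injective, card_univ, Fintype.card_fin])
      (fun x => mem_image_of_mem k (mem_univ x)) hmono) i).symm
  · intro T hT
    apply coe_injective
    rw [coe_image, coe_univ, Set.image_univ]
    exact range_orderEmbOfFin T _
  · intro k hk
    exact (prod_image fun x _ y _ hxy => (mem_filter.mp hk).2.injective hxy).symm

theorem Finset.coeff_prod_one_add_C_mul_X {ι R : Type*} [CommRing R] (s : Finset ι) (b : ι → R)
    (t : ℕ) : (∏ i ∈ s, (1 + C (b i) * X)).coeff t = ∑ T ∈ s.powersetCard t, ∏ i ∈ T, b i := by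
  simp_rw [prod_one_add, finsetSum_coeff, prod_mul_distrib, prod_const, ← map_prod,
    coeff_C_mul_X_pow, powersetCard_eq_filter, sum_filter, eq_comm]

section SinSqPoly

variable (R : Type*) [CommRing R]

/-- `4 sin² (n θ)` as a polynomial in `4 sin² θ`. -/
noncomputable def sinSqPoly : ℕ → R[X]
  | 0 => 0
  | 1 => X
  | n + 2 => 2 * X + (2 - X) * sinSqPoly (n + 1) - sinSqPoly n

variable {R}

theorem sinSqPoly_eval_two_sub_add_inv {K : Type*} [Field K] {w : K} (hw : w ≠ 0) :
    ∀ n, (sinSqPoly K n).eval (2 - w - w⁻¹) = 2 - w ^ n - w⁻¹ ^ n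
  | 0 => by norm_num [sinSqPoly]
  | 1 => by simp [sinSqPoly]
  | n + 2 => by
    simp only [sinSqPoly, eval_sub, eval_mul, eval_add, eval_ofNat, eval_X,
      sinSqPoly_eval_two_sub_add_inv hw (n + 1), sinSqPoly_eval_two_sub_add_inv hw n]
    linear_combination (-w ^ n - w⁻¹ ^ n) * mul_inv_cancel₀ hw

theorem coeff_sinSqPoly_zero : ∀ n, (sinSqPoly R n).coeff 0 = 0
  | 0 => by simp [sinSqPoly]
  | 1 => by simp [sinSqPoly]
  | n + 2 => by simp [sinSqPoly, coeff_sinSqPoly_zero n, coeff_sinSqPoly_zero (n + 1)]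

theorem coeff_sinSqPoly_add_two (n j : ℕ) : (sinSqPoly R (n + 2)).coeff (j + 1)
    = 2 * (X : R[X]).coeff (j + 1) + 2 * (sinSqPoly R (n + 1)).coeff (j + 1)
      - (sinSqPoly R (n + 1)).coeff j - (sinSqPoly R n).coeff (j + 1) := by
  rw [sinSqPoly, sub_mul, coeff_sub, coeff_add, coeff_sub, coeff_X_mul]
  simp only [coeff_ofNat_mul]
  ring

theorem coeff_sinSqPoly_succ : ∀ n j, (sinSqPoly R n).coeff (j + 1)
    = (-1) ^ j * ((n + j + 1).choose (2 * j + 2) + (n + j).choose (2 * j + 2) : ℕ)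
  | 0, j => by
    simp [sinSqPoly, Nat.choose_eq_zero_of_lt (show j + 1 < 2 * j + 2 by omega),
      Nat.choose_eq_zero_of_lt (show j < 2 * j + 2 by omega)]
  | 1, 0 => by simp [sinSqPoly]
  | 1, j + 1 => by
    simp [sinSqPoly, coeff_X,
      Nat.choose_eq_zero_of_lt (show 1 + (j + 1) + 1 < 2 * (j + 1) + 2 by omega),
      Nat.choose_eq_zero_of_lt (show 1 + (j + 1) < 2 * (j + 1) + 2 by omega)]
  | n + 2, 0 => by
    have h₁ := congrArg (Nat.cast : ℕ → R) <| Nat.choose_add_two_add_choose (n + 1) 0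
    have h₂ := congrArg (Nat.cast : ℕ → R) <| Nat.choose_add_two_add_choose n 0
    rw [coeff_sinSqPoly_add_two, coeff_sinSqPoly_succ (n + 1) 0, coeff_sinSqPoly_succ n 0,
      coeff_sinSqPoly_zero, zero_add, coeff_X_one]
    push_cast [Nat.choose_zero_right] at h₁ h₂ ⊢
    ring_nf at h₁ h₂ ⊢
    linear_combination -h₁ - h₂
  | n + 2, i + 1 => by
    have h₁ := congrArg (Nat.cast : ℕ → R) <|
      Nat.choose_add_two_add_choose (n + i + 2) (2 * i + 2)
    have h₂ := congrArg (Nat.cast : ℕ → R) <|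
      Nat.choose_add_two_add_choose (n + i + 1) (2 * i + 2)
    rw [coeff_sinSqPoly_add_two, coeff_sinSqPoly_succ (n + 1) (i + 1),
      coeff_sinSqPoly_succ (n + 1) i, coeff_sinSqPoly_succ n (i + 1), coeff_X, if_neg (by omega)]
    push_cast at h₁ h₂ ⊢
    ring_nf at h₁ h₂ ⊢
    linear_combination (-1) ^ i * (h₁ + h₂)

end SinSqPoly

theorem one_add_div_one_sub_sq_mul_two_sub_add_inv {K : Type*} [Field K] {z z' w : K}
    (hzz' : z * z' = 1) (hz : z ≠ 1) (hw : w ≠ 0) :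
    1 + z / (1 - z) ^ 2 * (2 - w - w⁻¹) = -z * (w - z) * (w - z') / (w * (1 - z) ^ 2) := by
  have : 1 - z ≠ 0 := sub_ne_zero.mpr hz.symm
  field_simp
  linear_combination (z - w) * hzz'

theorem IsAlgClosed.exists_ne_zero_two_sub_add_inv_eq {K : Type*} [Field K] [IsAlgClosed K]
    (x : K) : ∃ w ≠ 0, 2 - w - w⁻¹ = x := by
  obtain ⟨w, hw⟩ := IsAlgClosed.exists_root (X ^ 2 - C (2 - x) * X + 1 : K[X])
    (by rw [show (X ^ 2 - C (2 - x) * X + 1 : K[X]).degree = 2 by compute_degree!]; decide)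
  simp only [IsRoot, eval_add, eval_sub, eval_pow, eval_mul, eval_C, eval_X, eval_one] at hw
  have hw0 : w ≠ 0 := by rintro rfl; simp at hw
  refine ⟨w, hw0, ?_⟩
  field_simp
  linear_combination -hw

namespace IsPrimitiveRoot

variable {K : Type*} [Field K] {n : ℕ} {ζ : K} (hζ : IsPrimitiveRoot ζ (n + 1))
include hζ

theorem sub_one_mul_prod_sub_pow (w : K) :
    (w - 1) * ∏ k ∈ Icc 1 n, (w - ζ ^ k) = w ^ (n + 1) - 1 := by
  have h := congrArg (eval w) (X_pow_sub_C_eq_prod hζ n.succ_pos (one_pow (n + 1)))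
  simp only [eval_sub, eval_pow, eval_X, eval_C, eval_prod, mul_one] at h
  rw [h, prod_range_succ', prod_Icc_one_eq_prod_range, pow_zero, mul_comm]

theorem prod_neg_pow_eq_one : ∏ k ∈ Icc 1 n, -ζ ^ k = 1 := by
  simpa using hζ.sub_one_mul_prod_sub_pow 0

theorem prod_one_sub_pow_Icc : ∏ k ∈ Icc 1 n, (1 - ζ ^ k) = n + 1 := by
  rw [prod_Icc_one_eq_prod_range, hζ.prod_one_sub_pow_eq_order]

theorem pow_ne_one_of_mem_Icc {k : ℕ} (hk : k ∈ Icc 1 n) : ζ ^ k ≠ 1 := by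
  rw [mem_Icc] at hk
  exact hζ.pow_ne_one_of_pos_of_lt (by omega) (by omega)

theorem sq_mul_two_sub_add_inv_mul_prod {w : K} (hw : w ≠ 0) :
    (n + 1) ^ 2 * (2 - w - w⁻¹) * ∏ k ∈ Icc 1 n, (1 + ζ ^ k / (1 - ζ ^ k) ^ 2 * (2 - w - w⁻¹))
      = 2 - w ^ (n + 1) - w⁻¹ ^ (n + 1) := by
  have hfactor : ∀ k ∈ Icc 1 n, 1 + ζ ^ k / (1 - ζ ^ k) ^ 2 * (2 - w - w⁻¹)
      = -ζ ^ k * (w - ζ ^ k) * (w - ζ ^ (n + 1 - k)) / (w * (1 - ζ ^ k) ^ 2) := by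
    intro k hk
    refine one_add_div_one_sub_sq_mul_two_sub_add_inv ?_ (hζ.pow_ne_one_of_mem_Icc hk) hw
    have := (mem_Icc.mp hk).2
    rw [← pow_add, show k + (n + 1 - k) = n + 1 by omega, hζ.pow_eq_one]
  have hn : (n + 1 : K) ≠ 0 := by exact_mod_cast (hζ.neZero').out
  rw [prod_congr rfl hfactor, prod_div_distrib, prod_mul_distrib, prod_mul_distrib,
    prod_mul_distrib, prod_pow, prod_const, hζ.prod_neg_pow_eq_one,
    prod_Icc_one_reflect (fun k => w - ζ ^ k), hζ.prod_one_sub_pow_Icc, Nat.card_Icc,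
    Nat.add_sub_cancel]
  have hx : 2 - w - w⁻¹ = -(w - 1) ^ 2 / w := by field_simp; ring
  have hy : 2 - w ^ (n + 1) - w⁻¹ ^ (n + 1) = -(w ^ (n + 1) - 1) ^ 2 / w ^ (n + 1) := by
    rw [inv_pow]; field_simp; ring
  rw [hx, hy, ← hζ.sub_one_mul_prod_sub_pow w]
  field_simp
  ring

theorem C_mul_X_mul_prod_eq_sinSqPoly [IsAlgClosed K] :
    C ((n + 1) ^ 2 : K) * X * ∏ k ∈ Icc 1 n, (1 + C (ζ ^ k / (1 - ζ ^ k) ^ 2) * X)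
      = sinSqPoly K (n + 1) := by
  refine Polynomial.funext fun x => ?_
  obtain ⟨w, hw, rfl⟩ := IsAlgClosed.exists_ne_zero_two_sub_add_inv_eq x
  simpa [eval_prod, sinSqPoly_eval_two_sub_add_inv hw] using
    hζ.sq_mul_two_sub_add_inv_mul_prod hw

theorem sum_powersetCard_prod_div_one_sub_sq [IsAlgClosed K] [CharZero K] (t : ℕ) :
    ∑ T ∈ (Icc 1 n).powersetCard t, ∏ k ∈ T, ζ ^ k / (1 - ζ ^ k) ^ 2
      = (-1) ^ t * ((n + 1 + t).choose (2 * t + 1) : K) / ((n + 1) * (t + 1)) := by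
  have hcoeff := congrArg (coeff · (t + 1)) hζ.C_mul_X_mul_prod_eq_sinSqPoly
  simp only [mul_assoc, coeff_C_mul, coeff_X_mul, coeff_prod_one_add_C_mul_X,
    coeff_sinSqPoly_succ] at hcoeff
  have hchoose := congrArg (Nat.cast : ℕ → K) (Nat.add_one_mul_choose_add_choose (n + 1) t)
  push_cast at hcoeff hchoose
  have hn : (n + 1 : K) ≠ 0 := by exact_mod_cast (hζ.neZero').out
  have ht : (t + 1 : K) ≠ 0 := by exact_mod_cast t.succ_ne_zero
  rw [eq_div_iff (mul_ne_zero hn ht)]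
  apply mul_left_cancel₀ hn
  linear_combination (t + 1) * hcoeff + (-1) ^ t * hchoose

end IsPrimitiveRoot

theorem qH2t_eq_mul_sum_powersetCard (q : ℂ) (n t : ℕ) :
    qH2t q n t
      = (1 - q) ^ (2 * t) * ∑ T ∈ (Icc 1 n).powersetCard t, ∏ k ∈ T, q ^ k / (1 - q ^ k) ^ 2 := by
  have hterm (k : ℕ) : q ^ k / qint q k ^ 2 = (1 - q) ^ 2 * (q ^ k / (1 - q ^ k) ^ 2) := by
    rw [qint, div_pow, div_div_eq_mul_div]
    ring
  rw [qH2t, sum_filter_strictMono_prod_eq_sum_powersetCard _ _ fun k => q ^ k / qint q k ^ 2,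
    mul_sum]
  refine sum_congr rfl fun T hT => ?_
  rw [prod_congr rfl fun k _ => hterm k, prod_mul_distrib, prod_const,
    (mem_powersetCard.mp hT).2, ← pow_mul]

theorem stmt_14_general (t : ℕ) (p : ℕ) (hp : p.Prime)
    (ζ : ℂ) (hζ : IsPrimitiveRoot ζ p) :
    qH2t ζ (p - 1) t
      = (-1) ^ t * (Nat.choose (p + t) (2 * t + 1) : ℂ) * (1 - ζ) ^ (2 * t) /
          ((p : ℂ) * ((t : ℂ) + 1)) := by
  obtain ⟨n, rfl⟩ := Nat.exists_eq_add_one_of_ne_zero hp.ne_zero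
  rw [Nat.add_sub_cancel, qH2t_eq_mul_sum_powersetCard,
    hζ.sum_powersetCard_prod_div_one_sub_sq t]
  push_cast
  ring

theorem stmt_14 (t : ℕ) (ht : 1 ≤ t) (p : ℕ) (hp : p.Prime) (hpt : t < p)
    (ζ : ℂ) (hζ : IsPrimitiveRoot ζ p) :
    qH2t ζ (p - 1) t
      = (-1) ^ t * (Nat.choose (p + t) (2 * t + 1) : ℂ) * (1 - ζ) ^ (2 * t) /
          ((p : ℂ) * ((t : ℂ) + 1)) :=
  stmt_14_general t p hp ζ hζ
end

section
/- For any positive integer t and any prime p > t, H_{p-1}^q({2}^t; {0}^t) = ∑_{1≤k_1<⋯<k_t≤p-1} 1/([k_1]_q^2 ⋯ [k_t]_q^2) ≡ ( (-1)^t binom(p-1, 2t+1) + binom(p-1, t) ) · (1-q)^{2t} / ((t+1)p) modulo [p]_q. -/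
/-!
Put `b_k = 1 - ζ^k`. Since `1/[k]_ζ^2 = (1 - ζ)^2 / b_k^2`, the sum is `(1 - ζ)^{2t} e_t(b^{-2})`,
and `(-1)^t e_t(b^{-2})` is the coefficient of `X^{2t}` in `∏_k (1 - X^2 / b_k^2)`.
The roots of `1 + Y + ⋯ + Y^{p-1}` are the `ζ^k`, so `∏_k (b_k ± X) = G(±X)` with
`G(X) = ∑_{j<p} (1 + X)^j`; in particular `∏_k b_k = G(0) = p`, whence
`p^2 ∏_k (1 - X^2 / b_k^2) = G(X) G(-X)`. Finally `X G(X) = (1 + X)^p - 1`, so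
`X^2 G(X) G(-X) = (1 + X)^p + (1 - X)^p - (1 - X^2)^p - 1`, whose coefficients are binomial.
-/

open scoped Classical

/-- The homogeneous multiple `q`-harmonic sum
`H_n^q({2}^t;{0}^t) = ∑_{1≤k_1<⋯<k_t≤n} 1/([k_1]_q^2⋯[k_t]_q^2)`. -/
noncomputable def qH2t0 (q : ℂ) (n t : ℕ) : ℂ :=
  ∑ k ∈ (Fintype.piFinset fun _ : Fin t => Finset.Icc 1 n).filter
      (fun k => StrictMono k),
    ∏ i : Fin t, 1 / (qint q (k i)) ^ 2

open Finset Polynomial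

theorem Finset.sum_strictMono_prod_eq_sum_powersetCard {α R : Type*} [LinearOrder α]
    [CommSemiring R] (s : Finset α) (t : ℕ) (f : α → R) :
    ∑ k ∈ (Fintype.piFinset fun _ : Fin t => s).filter (fun k => StrictMono k), ∏ i, f (k i)
      = ∑ S ∈ s.powersetCard t, ∏ k ∈ S, f k := by
  refine sum_bij' (fun k _ => image k univ)
    (fun S hS => S.orderEmbOfFin (mem_powersetCard.mp hS).2) ?_ ?_ ?_ ?_ ?_
  · intro k hk
    rw [mem_filter, Fintype.mem_piFinset] at hk
    rw [mem_powersetCard, card_image_of_injective _ hk.2.injective, card_univ, Fintype.card_fin]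
    exact ⟨image_subset_iff.mpr fun i _ => hk.1 i, rfl⟩
  · intro S hS
    rw [mem_filter, Fintype.mem_piFinset]
    exact ⟨fun i => (mem_powersetCard.mp hS).1 (S.orderEmbOfFin_mem _ i),
      (S.orderEmbOfFin _).strictMono⟩
  · intro k hk
    exact (orderEmbOfFin_unique _ (fun i => mem_image_of_mem k (mem_univ i))
      (mem_filter.mp hk).2).symm
  · intro S _
    simp
  · intro k hk
    rw [prod_image fun i _ j _ h => (mem_filter.mp hk).2.injective h]

theorem Polynomial.coeff_prod_one_add_C_mul_X_pow {ι R : Type*} [CommSemiring R]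
    (s : Finset ι) (c : ι → R) {m : ℕ} (hm : 0 < m) (t : ℕ) :
    (∏ i ∈ s, (1 + C (c i) * X ^ m)).coeff (m * t) = ∑ T ∈ s.powersetCard t, ∏ i ∈ T, c i := by
  have hterm (T : Finset ι) : (∏ i ∈ T, C (c i) * X ^ m).coeff (m * t)
      = if #T = t then ∏ i ∈ T, c i else 0 := by
    rw [prod_mul_distrib, prod_const, ← map_prod, ← pow_mul, coeff_C_mul_X_pow]
    simp only [Nat.mul_left_cancel_iff hm, eq_comm]
  rw [prod_one_add, finsetSum_coeff, sum_congr rfl fun T _ => hterm T, ← sum_filter,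
    powersetCard_eq_filter]

theorem Polynomial.coeff_one_add_C_mul_X_pow_pow {R : Type*} [CommSemiring R] (a : R) {m : ℕ}
    (hm : 0 < m) (n t : ℕ) : ((1 + C a * X ^ m) ^ n).coeff (m * t) = n.choose t * a ^ t := by
  rw [← card_range n, ← prod_const, coeff_prod_one_add_C_mul_X_pow _ _ hm,
    sum_congr rfl fun T hT => by rw [prod_const, (mem_powersetCard.mp hT).2], sum_const,
    card_powersetCard, nsmul_eq_mul]

theorem Polynomial.coeff_geom_sum_one_add_X_mul_geom_sum_one_sub_X {R : Type*} [CommRing R]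
    (n t : ℕ) :
    ((∑ j ∈ range n, (1 + X : R[X]) ^ j) * ∑ j ∈ range n, (1 - X : R[X]) ^ j).coeff (2 * t)
      = (-1) ^ t * n.choose (t + 1) + 2 * n.choose (2 * t + 2) := by
  have hX : (X : R[X]) ^ 2 * ((∑ j ∈ range n, (1 + X) ^ j) * ∑ j ∈ range n, (1 - X) ^ j)
      = (1 + X) ^ n + (1 - X) ^ n - (1 - X ^ 2) ^ n - 1 := by
    have hplus := geom_sum_mul (1 + X : R[X]) n
    have hminus := geom_sum_mul (1 - X : R[X]) n
    rw [show (1 - X ^ 2 : R[X]) = (1 + X) * (1 - X) by ring, mul_pow]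
    linear_combination (1 - (1 - X : R[X]) ^ n) * hplus
      - (∑ j ∈ range n, (1 + X : R[X]) ^ j) * X * hminus
  have hminus : ((1 - X : R[X]) ^ n).coeff (2 * (t + 1)) = n.choose (2 * (t + 1)) := by
    have := coeff_one_add_C_mul_X_pow_pow (-1 : R) one_pos n (2 * (t + 1))
    rwa [C_neg, C_1, pow_one, neg_one_mul, ← sub_eq_add_neg, one_mul,
      Even.neg_one_pow ⟨t + 1, by ring⟩, mul_one] at this
  have hsq : ((1 - X ^ 2 : R[X]) ^ n).coeff (2 * (t + 1)) = n.choose (t + 1) * (-1) ^ (t + 1) := by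
    rw [← coeff_one_add_C_mul_X_pow_pow (-1 : R) two_pos, C_neg, C_1, neg_one_mul,
      ← sub_eq_add_neg]
  rw [← coeff_X_pow_mul _ 2, hX, show 2 * t + 2 = 2 * (t + 1) by ring]
  simp only [coeff_sub, coeff_add, coeff_one_add_X_pow, hminus, hsq]
  rw [coeff_one, if_neg (by omega)]
  ring

theorem IsPrimitiveRoot.prod_Icc_sub_pow_eq_geom_sum {R A : Type*} [CommRing R] [IsDomain R]
    [CommRing A] [Algebra R A] {μ : R} {n : ℕ} (hμ : IsPrimitiveRoot μ (n + 1)) (x : A) :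
    ∏ k ∈ Icc 1 n, (x - algebraMap R A (μ ^ k)) = ∑ j ∈ range (n + 1), x ^ j := by
  have hroots := X_pow_sub_C_eq_prod hμ n.succ_pos (one_pow (n + 1))
  rw [C_1, ← mul_geom_sum, prod_range_succ', pow_zero, mul_one, mul_comm] at hroots
  have hpoly : ∏ k ∈ Icc 1 n, (X - C (μ ^ k)) = ∑ j ∈ range (n + 1), (X : R[X]) ^ j := by
    rw [← Ico_add_one_right_eq_Icc, prod_Ico_eq_prod_range, Nat.add_sub_cancel]
    simp only [mul_one] at hroots
    simp_rw [add_comm 1]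
    exact (mul_right_cancel₀ (X_sub_C_ne_zero 1) hroots).symm
  simpa using congrArg (aeval x) hpoly

theorem IsPrimitiveRoot.mul_prod_one_add_C_mul_X_sq {K : Type*} [Field K] {μ : K} {n : ℕ}
    (hμ : IsPrimitiveRoot μ (n + 1)) :
    C (((n : K) + 1) ^ 2) * ∏ k ∈ Icc 1 n, (1 + C (-((1 - μ ^ k) ^ 2)⁻¹) * X ^ 2)
      = (∑ j ∈ range (n + 1), (1 + X : K[X]) ^ j) * ∑ j ∈ range (n + 1), (1 - X : K[X]) ^ j := by
  have hprod : ∏ k ∈ Icc 1 n, (1 - μ ^ k) = n + 1 := by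
    simpa using hμ.prod_Icc_sub_pow_eq_geom_sum (1 : K)
  have hne (k) (hk : k ∈ Icc 1 n) : 1 - μ ^ k ≠ 0 := by
    rw [mem_Icc] at hk
    exact sub_ne_zero.mpr (hμ.pow_ne_one_of_pos_of_lt (by omega) (by omega)).symm
  rw [← hμ.prod_Icc_sub_pow_eq_geom_sum, ← hμ.prod_Icc_sub_pow_eq_geom_sum, ← prod_mul_distrib,
    ← hprod, ← prod_pow, map_prod, ← prod_mul_distrib]
  refine prod_congr rfl fun k hk => ?_
  have hinv : C ((1 - μ ^ k) ^ 2) * C (-((1 - μ ^ k) ^ 2)⁻¹) = (-1 : K[X]) := by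
    rw [← C_mul, mul_neg, mul_inv_cancel₀ (pow_ne_zero 2 (hne k hk)), C_neg, C_1]
  have hC : C ((1 - μ ^ k) ^ 2) = (1 - C (μ ^ k)) ^ 2 := by simp
  rw [Polynomial.algebraMap_eq]
  linear_combination X ^ 2 * hinv + hC

theorem IsPrimitiveRoot.sum_powersetCard_prod_inv_one_sub_pow_sq {K : Type*} [Field K] {μ : K}
    {n : ℕ} (hμ : IsPrimitiveRoot μ (n + 1)) (t : ℕ) :
    ((t : K) + 1) * (n + 1) * ∑ S ∈ (Icc 1 n).powersetCard t, ∏ k ∈ S, ((1 - μ ^ k) ^ 2)⁻¹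
      = n.choose t + (-1) ^ t * n.choose (2 * t + 1) := by
  have hcoeff := congrArg (coeff · (2 * t)) hμ.mul_prod_one_add_C_mul_X_sq
  simp only [coeff_C_mul, coeff_prod_one_add_C_mul_X_pow _ _ two_pos,
    coeff_geom_sum_one_add_X_mul_geom_sum_one_sub_X] at hcoeff
  have hneg : ∑ S ∈ (Icc 1 n).powersetCard t, ∏ k ∈ S, -((1 - μ ^ k) ^ 2)⁻¹
      = (-1) ^ t * ∑ S ∈ (Icc 1 n).powersetCard t, ∏ k ∈ S, ((1 - μ ^ k) ^ 2)⁻¹ := by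
    rw [mul_sum]
    exact sum_congr rfl fun S hS => by rw [prod_neg, (mem_powersetCard.mp hS).2]
  have hn : (n : K) + 1 ≠ 0 := by exact_mod_cast hμ.neZero'.out
  have h1 := congrArg (Nat.cast : ℕ → K) (Nat.add_one_mul_choose_eq n t)
  have h2 := congrArg (Nat.cast : ℕ → K) (Nat.add_one_mul_choose_eq n (2 * t + 1))
  push_cast at h1 h2
  rw [hneg] at hcoeff
  have hsq : ((-1 : K) ^ t) ^ 2 = 1 := by rw [← pow_mul, pow_mul', neg_one_sq, one_pow]
  apply mul_left_cancel₀ hn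
  linear_combination -h1 - (-1) ^ t * h2 + (t + 1) * (-1) ^ t * hcoeff
    + (t + 1) * ((n + 1).choose (t + 1) - (n + 1) ^ 2
      * ∑ S ∈ (Icc 1 n).powersetCard t, ∏ k ∈ S, ((1 - μ ^ k) ^ 2)⁻¹) * hsq

theorem qH2t0_eq_mul_sum_powersetCard (q : ℂ) (n t : ℕ) :
    qH2t0 q n t
      = (1 - q) ^ (2 * t) * ∑ S ∈ (Icc 1 n).powersetCard t, ∏ k ∈ S, ((1 - q ^ k) ^ 2)⁻¹ := by
  rw [qH2t0, sum_strictMono_prod_eq_sum_powersetCard _ _ fun k => 1 / qint q k ^ 2, mul_sum]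
  refine sum_congr rfl fun S hS => ?_
  rw [pow_mul, ← (mem_powersetCard.mp hS).2, ← prod_const, ← prod_mul_distrib]
  refine prod_congr rfl fun k _ => ?_
  rw [qint, div_pow, one_div_div, div_eq_mul_inv]

theorem stmt_15_general (t : ℕ) (p : ℕ) (hp : p.Prime)
    (ζ : ℂ) (hζ : IsPrimitiveRoot ζ p) :
    qH2t0 ζ (p - 1) t
      = ((-1) ^ t * (Nat.choose (p - 1) (2 * t + 1) : ℂ) + (Nat.choose (p - 1) t : ℂ)) *
          (1 - ζ) ^ (2 * t) / (((t : ℂ) + 1) * (p : ℂ)) := by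
  obtain ⟨n, rfl⟩ := Nat.exists_eq_add_one_of_ne_zero hp.ne_zero
  have hsum := hζ.sum_powersetCard_prod_inv_one_sub_pow_sq t
  rw [Nat.add_sub_cancel, qH2t0_eq_mul_sum_powersetCard, eq_div_iff (by norm_cast)]
  push_cast
  linear_combination (1 - ζ) ^ (2 * t) * hsum

theorem stmt_15 (t : ℕ) (ht : 1 ≤ t) (p : ℕ) (hp : p.Prime) (hpt : t < p)
    (ζ : ℂ) (hζ : IsPrimitiveRoot ζ p) :
    qH2t0 ζ (p - 1) t
      = ((-1) ^ t * (Nat.choose (p - 1) (2 * t + 1) : ℂ) + (Nat.choose (p - 1) t : ℂ)) *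
          (1 - ζ) ^ (2 * t) / (((t : ℂ) + 1) * (p : ℂ)) :=
  stmt_15_general t p hp ζ hζ
end

section
/- Let p be a prime. Then as polynomials in x modulo [p]_q (i.e., each coefficient congruence holds modulo the p-th cyclotomic polynomial [p]_q = 1+q+⋯+q^{p-1} after clearing denominators), ∏_{k=1}^{p-1} (1 + x/(1-q^k)) ≡ -(1-(1+x)^p)/(px). -/
/-!
Writing `1 + x/(1 - ζ^k) = (1 + x - ζ^k)/(1 - ζ^k)`, both the numerator and the denominator of the
product are values of `∏_{k=1}^{p-1} (y - ζ^k) = (y^p - 1)/(y - 1) = 1 + y + ⋯ + y^{p-1}`, at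
`y = 1 + x` and at `y = 1` respectively; the latter value is `p`.
-/

open Finset Polynomial

namespace IsPrimitiveRoot

variable {R : Type*} [CommRing R] [IsDomain R]

theorem prod_Icc_sub_pow_eq_geom_sum_s16 {n : ℕ} {μ : R} (hμ : IsPrimitiveRoot μ (n + 1)) (y : R) :
    ∏ k ∈ Icc 1 n, (y - μ ^ k) = ∑ i ∈ range (n + 1), y ^ i := by
  have h := X_pow_sub_C_eq_prod hμ n.zero_lt_succ (one_pow (n + 1))
  rw [C_1, ← mul_geom_sum, prod_range_succ', pow_zero, mul_one, mul_comm, eq_comm] at h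
  replace h := congrArg (eval y) (mul_right_cancel₀ (X_sub_C_ne_zero 1) h)
  rw [← Finset.Ico_add_one_right_eq_Icc, prod_Ico_eq_prod_range, Nat.add_sub_cancel]
  simpa only [eval_prod, eval_sub, eval_X, eval_C, eval_geom_sum, mul_one, add_comm 1] using h

end IsPrimitiveRoot

/-- A congruence modulo `[p]_q = Φ_p` is an equality at every primitive `p`-th root of unity. -/
theorem stmt_16 (p : ℕ) (hp : p.Prime) (ζ : ℂ) (hζ : IsPrimitiveRoot ζ p)
    (x : ℂ) (hx : x ≠ 0) :
    ∏ k ∈ Finset.Icc 1 (p - 1), (1 + x / (1 - ζ ^ k))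
      = -(1 - (1 + x) ^ p) / ((p : ℂ) * x) := by
  obtain ⟨n, rfl⟩ := Nat.exists_eq_add_one_of_ne_zero hp.ne_zero
  rw [Nat.add_sub_cancel]
  have hden : ∏ k ∈ Icc 1 n, (1 - ζ ^ k) = (n + 1 : ℂ) := by
    simpa using hζ.prod_Icc_sub_pow_eq_geom_sum_s16 1
  have hne : ∀ k ∈ Icc 1 n, 1 - ζ ^ k ≠ 0 :=
    prod_ne_zero_iff.mp (hden ▸ Nat.cast_add_one_ne_zero n)
  have hfactor : ∀ k ∈ Icc 1 n, 1 + x / (1 - ζ ^ k) = (1 + x - ζ ^ k) / (1 - ζ ^ k) := by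
    intro k hk
    field_simp [hne k hk]
    ring
  rw [prod_congr rfl hfactor, prod_div_distrib, hden, hζ.prod_Icc_sub_pow_eq_geom_sum_s16,
    neg_sub, ← geom_sum_mul, add_sub_cancel_left]
  push_cast
  field_simp
end

section
/- Let p, s be positive integers and δ ∈ {0,1}. Define T(p,s,δ) as the coefficient of x^{3s} in ∑_{k=0}^{p-δ} (-1)^k binom(p-k-δ, k-δ) (2-x)^{p-2k} (1+x)^{s-k}. Then T(p,s,δ) = (-1)^δ binom(s+p-2δ+1, 3s+1). -/
/-- Integer power of a formal power series over `ℚ` (negative powers via the formal inverse,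
which is the genuine inverse when the constant term is nonzero). -/
noncomputable def ipow (f : PowerSeries ℚ) (m : ℤ) : PowerSeries ℚ :=
  if 0 ≤ m then f ^ m.toNat else (f ^ (-m).toNat)⁻¹

/-- Binomial coefficient `binom(m, j)` with integer lower index, vanishing for `j < 0`. -/
def ichoose (m : ℕ) (j : ℤ) : ℤ :=
  if j < 0 then 0 else m.choose j.toNat

/-!
Write `y = 2 - x` and `z = 1 + x`. Shifting the summation index by `δ` turns the sum into
`(-1)^δ z^(s-δ) U_(p+1-2δ)`, where `U` is the Lucas sequence `U_(n+2) = y U_(n+1) - z⁻¹ U_n`.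
With `N = s + 1 - δ`, the series `∑ₙ z^(N-1) Uₙ wⁿ` is `w z^N / D` with
`D = (1 - w)² + (1 - w) x + w x²`. Over `ℚ⟦w⟧` this factors as `(1 - w + βx)(1 - w + γx)`, where
`γ = w·Catalan(w)` and `β = 1 - γ` are the roots of `t² - t + w`, so partial fractions give the
`x ^ m`-coefficient of `w z^N / D` in closed form. For `m = 3s` and `N ∈ {s, s + 1}` the relation
`βγ = w` collapses it to `w^(2s+1) / (1 - w)^(3s+2)`, whose `wⁿ`-coefficient is
`binom(n + s, 3s + 1)`.
-/

open PowerSeries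

variable {R : Type*} [CommRing R]

def lucasU (P Q : R) : ℕ → R
  | 0 => 0
  | 1 => 1
  | n + 2 => P * lucasU P Q (n + 1) - Q * lucasU P Q n

theorem eq_mul_lucasU {P Q : R} {T : ℕ → R} (h0 : T 0 = 0)
    (hrec : ∀ n, T (n + 2) = P * T (n + 1) - Q * T n) (n : ℕ) : T n = T 1 * lucasU P Q n := by
  induction n using Nat.twoStepInduction with
  | zero => simp [h0, lucasU]
  | one => simp [lucasU]
  | more n ih₀ ih₁ => rw [hrec, ih₀, ih₁, lucasU]; ring

open Finset in
theorem lucasU_eq_sum (P Q : R) (n : ℕ) :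
    lucasU P Q n = ∑ k ∈ range n,
      (-1) ^ k * ((n - 1 - k).choose k : R) * P ^ (n - 1 - 2 * k) * Q ^ k := by
  set t : ℕ → ℕ → R :=
    fun n k => (-1) ^ k * ((n - 1 - k).choose k : R) * P ^ (n - 1 - 2 * k) * Q ^ k
  have pascal (n j : ℕ) (hj : j < n) : t (n + 2) (j + 1) = P * t (n + 1) (j + 1) - Q * t n j := by
    have hchoose : (n - j).choose (j + 1) = (n - 1 - j).choose j + (n - 1 - j).choose (j + 1) := by
      rw [show n - j = n - 1 - j + 1 by omega, Nat.choose_succ_succ]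
    simp only [t, show n + 2 - 1 - (j + 1) = n - j by omega,
      show n + 2 - 1 - 2 * (j + 1) = n - 1 - 2 * j by omega, hchoose,
      show n + 1 - 1 - (j + 1) = n - 1 - j by omega]
    rcases le_or_gt (2 * j + 2) n with h | h
    · rw [show n - 1 - 2 * j = n + 1 - 1 - 2 * (j + 1) + 1 by omega]
      push_cast; ring
    · rw [Nat.choose_eq_zero_of_lt (by omega : n - 1 - j < j + 1)]
      push_cast; ring
  have hrec (n : ℕ) : ∑ k ∈ range (n + 2), t (n + 2) k
      = P * ∑ k ∈ range (n + 1), t (n + 1) k - Q * ∑ k ∈ range n, t n k := by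
    have hfirst : t (n + 2) 0 = P * t (n + 1) 0 := by simp [t, pow_succ']
    have hlast : t (n + 2) (n + 1) = 0 := by simp [t]
    rw [sum_range_succ', sum_range_succ, sum_range_succ' (t (n + 1)) n, mul_add, mul_sum, mul_sum,
      sum_congr rfl fun j hj => pascal n j (mem_range.mp hj), sum_sub_distrib, hfirst, hlast]
    ring
  rw [eq_mul_lucasU (T := fun n => ∑ k ∈ range n, t n k) (by simp) hrec n]
  simp [t]

/-- Elements of `R⟦X⟧⟦X⟧` are series in `x` with coefficients in `R⟦w⟧`. -/
noncomputable def innerCoeff (n : ℕ) (F : R⟦X⟧⟦X⟧) : R⟦X⟧ := mk fun m => coeff n (coeff m F)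

@[simp]
theorem coeff_innerCoeff (n m : ℕ) (F : R⟦X⟧⟦X⟧) :
    coeff m (innerCoeff n F) = coeff n (coeff m F) := coeff_mk _ _

theorem innerCoeff_sub (n : ℕ) (F G : R⟦X⟧⟦X⟧) :
    innerCoeff n (F - G) = innerCoeff n F - innerCoeff n G := by ext; simp

theorem innerCoeff_map_C_mul (n : ℕ) (g : R⟦X⟧) (F : R⟦X⟧⟦X⟧) :
    innerCoeff n (map C g * F) = g * innerCoeff n F := by
  ext m
  rw [coeff_innerCoeff, coeff_mul, coeff_mul, map_sum]
  refine Finset.sum_congr rfl fun x _ => ?_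
  rw [coeff_map, coeff_C_mul, coeff_innerCoeff]

theorem innerCoeff_zero_C_X_mul (F : R⟦X⟧⟦X⟧) : innerCoeff 0 (C X * F) = 0 := by
  ext m; simp

theorem innerCoeff_succ_C_X_mul (n : ℕ) (F : R⟦X⟧⟦X⟧) :
    innerCoeff (n + 1) (C X * F) = innerCoeff n F := by
  ext m; simp [coeff_succ_X_mul]

theorem innerCoeff_zero_map_C (g : R⟦X⟧) : innerCoeff 0 (map C g) = g := by
  ext m; simp

theorem innerCoeff_succ_map_C (n : ℕ) (g : R⟦X⟧) : innerCoeff (n + 1) (map C g) = 0 := by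
  ext m; simp

/-- The denominator of `∑ₙ (1 + x)^(N-1) Uₙ(2 - x, (1 + x)⁻¹) wⁿ = w (1 + x)^N / lucasDenom`. -/
noncomputable def lucasDenom : R⟦X⟧⟦X⟧ :=
  map C (1 + X) - C X * (map C ((2 - X) * (1 + X)) - C X)

theorem innerCoeff_zero_lucasDenom_mul (F : R⟦X⟧⟦X⟧) :
    innerCoeff 0 (lucasDenom * F) = (1 + X) * innerCoeff 0 F := by
  rw [lucasDenom, sub_mul, innerCoeff_sub, mul_assoc, innerCoeff_zero_C_X_mul, sub_zero,
    innerCoeff_map_C_mul]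

theorem innerCoeff_succ_lucasDenom_mul (n : ℕ) (F : R⟦X⟧⟦X⟧) :
    innerCoeff (n + 1) (lucasDenom * F) = (1 + X) * innerCoeff (n + 1) F
      - (2 - X) * (1 + X) * innerCoeff n F + innerCoeff n (C X * F) := by
  rw [lucasDenom, sub_mul, innerCoeff_sub, mul_assoc, innerCoeff_succ_C_X_mul, sub_mul,
    innerCoeff_sub, innerCoeff_map_C_mul, innerCoeff_map_C_mul]
  ring

theorem innerCoeff_eq_lucasU {N : ℕ} (hN : 1 ≤ N) {S : R⟦X⟧⟦X⟧}
    (hS : lucasDenom * S = C X * map C ((1 + X) ^ N)) {Q : R⟦X⟧} (hQ : Q * (1 + X) = 1)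
    (n : ℕ) : innerCoeff n S = (1 + X) ^ (N - 1) * lucasU (2 - X) Q n := by
  have h0 : innerCoeff 0 S = 0 := by
    have := congrArg (innerCoeff 0) hS
    rw [innerCoeff_zero_lucasDenom_mul, innerCoeff_zero_C_X_mul] at this
    linear_combination Q * this - innerCoeff 0 S * hQ
  have h1 : innerCoeff 1 S = (1 + X) ^ (N - 1) := by
    have := congrArg (innerCoeff 1) hS
    rw [innerCoeff_succ_lucasDenom_mul, innerCoeff_succ_C_X_mul, innerCoeff_zero_map_C, h0,
      innerCoeff_zero_C_X_mul, ← Nat.sub_add_cancel hN, pow_succ] at this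
    linear_combination Q * this - (innerCoeff 1 S - (1 + X) ^ (N - 1)) * hQ
  have hrec (n : ℕ) : innerCoeff (n + 2) S
      = (2 - X) * innerCoeff (n + 1) S - Q * innerCoeff n S := by
    have := congrArg (innerCoeff (n + 2)) hS
    rw [innerCoeff_succ_lucasDenom_mul, innerCoeff_succ_C_X_mul, innerCoeff_succ_C_X_mul,
      innerCoeff_succ_map_C] at this
    linear_combination Q * this - (innerCoeff (n + 2) S - (2 - X) * innerCoeff (n + 1) S) * hQ
  rw [eq_mul_lucasU (T := (innerCoeff · S)) h0 hrec n, h1]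

theorem one_sub_C_mul_X_mul_rescale_mk_one (a : R) : (1 - C a * X) * rescale a (mk 1) = 1 := by
  rw [← rescale_X, ← map_one (rescale a), ← map_sub, ← map_mul, mul_comm,
    mk_one_mul_one_sub_eq_one, map_one]

theorem coeff_one_add_X_pow_mul_rescale_mk_one (a : R) {N m : ℕ} (h : N ≤ m) :
    coeff m ((1 + X) ^ N * rescale a (mk 1)) = a ^ (m - N) * (1 + a) ^ N := by
  obtain ⟨k, rfl⟩ := Nat.exists_eq_add_of_le h
  induction N generalizing k with
  | zero => simp [coeff_rescale]
  | succ N ih =>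
    rw [pow_succ', mul_assoc, add_mul, one_mul, map_add, show N + 1 + k = N + k + 1 by omega,
      coeff_succ_X_mul, ih k le_self_add, Nat.add_assoc, ih (k + 1) le_self_add]
    simp only [Nat.add_sub_cancel_left, show N + (k + 1) - (N + 1) = k by omega]
    ring

noncomputable def invLinear (ι b : R) : R⟦X⟧ := C ι * rescale (-(b * ι)) (mk 1)

theorem mul_invLinear {α ι : R} (hι : ι * α = 1) (b : R) :
    (C α + C b * X) * invLinear ι b = 1 := by
  have hC : C ι * C α = 1 := by rw [← map_mul, hι, map_one]
  have : (C α + C b * X) * C ι = 1 - C (-(b * ι)) * X := by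
    simp only [map_neg, map_mul]
    linear_combination hC
  rw [invLinear, ← mul_assoc, this, one_sub_C_mul_X_mul_rescale_mk_one]

theorem coeff_one_add_X_pow_mul_invLinear (ι b : R) {N m : ℕ} (h : N ≤ m) :
    coeff m ((1 + X) ^ N * invLinear ι b) = ι * ((-(b * ι)) ^ (m - N) * (1 - b * ι) ^ N) := by
  rw [invLinear, mul_left_comm, coeff_C_mul, coeff_one_add_X_pow_mul_rescale_mk_one _ h,
    sub_eq_add_neg]

/- The two partial-fraction terms are multiples of `(βγ)^(2s) = w^(2s)`, which is why only the
diagonal `x`-degree `3s` has a closed form. -/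
theorem partial_fractions_collapse {w ι β γ θ : R}
    (hι : ι * (1 - w) = 1) (hsum : β + γ = 1) (hprod : β * γ = w) (hθ : (β - γ) * θ = 1)
    {s N : ℕ} (hs : 1 ≤ s) (hN : N = s ∨ N = s + 1) :
    w * ι * θ * (β * (ι * ((-(β * ι)) ^ (3 * s - N) * (1 - β * ι) ^ N))
      - γ * (ι * ((-(γ * ι)) ^ (3 * s - N) * (1 - γ * ι) ^ N)))
      = w ^ (2 * s + 1) * ι ^ (3 * s + 2) := by
  have hβ : 1 - β * ι = ι * γ ^ 2 := by
    linear_combination (-1) * hι - ι * (1 + γ) * hsum + ι * hprod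
  have hγ : 1 - γ * ι = ι * β ^ 2 := by
    linear_combination (-1) * hι - ι * (1 + β) * hsum + ι * hprod
  rw [hβ, hγ]
  rcases hN with rfl | rfl
  · have hpow : (β * γ) ^ (2 * N) = w ^ (2 * N) := by rw [hprod]
    rw [show 3 * N - N = 2 * N by omega, Even.neg_pow ⟨N, by ring⟩, Even.neg_pow ⟨N, by ring⟩]
    linear_combination (w * ι ^ (3 * N + 2) * (β * γ) ^ (2 * N)) * hθ
      + w * ι ^ (3 * N + 2) * hpow
  · obtain ⟨r, rfl⟩ : ∃ r, s = r + 1 := ⟨s - 1, by omega⟩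
    have hpow : (β * γ) ^ (2 * r + 2) = w ^ (2 * r + 2) := by rw [hprod]
    rw [show 3 * (r + 1) - (r + 1 + 1) = 2 * r + 1 by omega, Odd.neg_pow ⟨r, rfl⟩,
      Odd.neg_pow ⟨r, rfl⟩]
    linear_combination (w * ι ^ (3 * r + 5) * (β * γ) ^ (2 * r + 2)) * hθ
      + w * ι ^ (3 * r + 5) * hpow
      - w * θ * ι ^ (3 * r + 5) * (β * γ) ^ (2 * r + 2) * (γ - β) * hsum

section LucasSeries

variable (R)

noncomputable def catalanRoot : R⟦X⟧ := X * map (Nat.castRingHom R) catalanSeries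

theorem one_sub_catalanRoot_mul : (1 - catalanRoot R) * catalanRoot R = X := by
  have h := congrArg (map (Nat.castRingHom R)) catalanSeries_sq_mul_X_add_one
  simp only [map_add, map_mul, map_pow, map_X, map_one] at h
  unfold catalanRoot
  linear_combination (-X) * h

theorem one_sub_two_mul_catalanRoot_mul_invOfUnit :
    (1 - 2 * catalanRoot R) * invOfUnit (1 - 2 * catalanRoot R) 1 = 1 :=
  mul_invOfUnit _ _ (by simp [catalanRoot])

theorem lucasDenom_eq_mul : (lucasDenom : R⟦X⟧⟦X⟧)
    = (C (1 - X) + C (1 - catalanRoot R) * X) * (C (1 - X) + C (catalanRoot R) * X) := by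
  have h := congrArg C (one_sub_catalanRoot_mul R)
  simp only [lucasDenom, map_mul, map_sub, map_add, map_one, map_X, map_ofNat] at h ⊢
  linear_combination (-X ^ 2) * h

/-- `w (1 + x)^N / lucasDenom`, expanded by partial fractions over the factorization
`lucasDenom_eq_mul`. -/
noncomputable def lucasSeries (N : ℕ) : R⟦X⟧⟦X⟧ :=
  C (X * mk 1 * invOfUnit (1 - 2 * catalanRoot R) 1) * ((1 + X) ^ N *
    (C (1 - catalanRoot R) * invLinear (mk 1) (1 - catalanRoot R)
      - C (catalanRoot R) * invLinear (mk 1) (catalanRoot R)))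

theorem lucasDenom_mul_lucasSeries (N : ℕ) :
    lucasDenom * lucasSeries R N = C X * map C ((1 + X) ^ N) := by
  rw [lucasDenom_eq_mul, lucasSeries]
  set γ := catalanRoot R
  set θ := invOfUnit (1 - 2 * γ) 1
  have hι : mk 1 * (1 - X) = (1 : R⟦X⟧) := mk_one_mul_one_sub_eq_one R
  have hpartial : (C (1 - X) + C (1 - γ) * X) * (C (1 - X) + C γ * X)
      * (C (1 - γ) * invLinear (mk 1) (1 - γ) - C γ * invLinear (mk 1) γ)
      = C ((1 - X) * (1 - 2 * γ)) := by
    have hC : C ((1 - X) * (1 - 2 * γ)) = C (1 - X) * C (1 - γ) - C (1 - X) * C γ := by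
      simp only [map_mul, map_sub, map_one, map_ofNat]; ring
    linear_combination (C (1 - γ) * (C (1 - X) + C γ * X)) * mul_invLinear hι (1 - γ)
      - (C γ * (C (1 - X) + C (1 - γ) * X)) * mul_invLinear hι γ - hC
  rw [mul_left_comm, mul_left_comm _ ((1 + X) ^ N), ← mul_assoc, hpartial, mul_right_comm,
    ← map_mul, map_pow, map_add, map_one, map_X]
  congr 2
  linear_combination (X * θ * (1 - 2 * γ)) * hι + X * one_sub_two_mul_catalanRoot_mul_invOfUnit R

theorem coeff_lucasSeries {s N : ℕ} (hs : 1 ≤ s) (hN : N = s ∨ N = s + 1) :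
    coeff (3 * s) (lucasSeries R N) = X ^ (2 * s + 1) * mk 1 ^ (3 * s + 2) := by
  have hm : N ≤ 3 * s := by omega
  rw [lucasSeries, coeff_C_mul, mul_sub, mul_left_comm, mul_left_comm _ (C (catalanRoot R)),
    map_sub, coeff_C_mul, coeff_C_mul, coeff_one_add_X_pow_mul_invLinear _ _ hm,
    coeff_one_add_X_pow_mul_invLinear _ _ hm]
  refine partial_fractions_collapse (mk_one_mul_one_sub_eq_one R) (sub_add_cancel _ _)
    (one_sub_catalanRoot_mul R) ?_ hs hN
  rw [sub_sub, ← two_mul]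
  exact one_sub_two_mul_catalanRoot_mul_invOfUnit R

theorem coeff_X_pow_mul_mk_one_pow (s n : ℕ) :
    coeff n (X ^ (2 * s + 1) * mk 1 ^ (3 * s + 2) : R⟦X⟧) = ((n + s).choose (3 * s + 1) : R) := by
  rw [coeff_X_pow_mul', mk_one_pow_eq_mk_choose_add]
  split_ifs with h
  · rw [coeff_mk, show 3 * s + 1 + (n - (2 * s + 1)) = n + s by omega]
  · rw [Nat.choose_eq_zero_of_lt (by omega), Nat.cast_zero]

end LucasSeries

theorem coeff_one_add_X_pow_mul_lucasU {s N : ℕ} (hs : 1 ≤ s) (hN : N = s ∨ N = s + 1)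
    {Q : R⟦X⟧} (hQ : Q * (1 + X) = 1) (n : ℕ) :
    coeff (3 * s) ((1 + X) ^ (N - 1) * lucasU (2 - X) Q n) = ((n + s).choose (3 * s + 1) : R) := by
  rw [← innerCoeff_eq_lucasU (by omega) (lucasDenom_mul_lucasSeries R N) hQ, coeff_innerCoeff,
    coeff_lucasSeries R hs hN, coeff_X_pow_mul_mk_one_pow]

theorem ipow_natCast (f : ℚ⟦X⟧) (n : ℕ) : ipow f n = f ^ n := by
  rw [ipow, if_pos (Int.natCast_nonneg n), Int.toNat_natCast]

theorem ipow_coe_unit (u : ℚ⟦X⟧ˣ) (m : ℤ) : ipow u m = ↑(u ^ m) := by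
  rcases le_or_gt 0 m with hm | hm
  · lift m to ℕ using hm
    rw [ipow_natCast, zpow_natCast, Units.val_pow_eq_pow_val]
  · obtain ⟨n, rfl⟩ : ∃ n : ℕ, m = -n := ⟨(-m).toNat, by omega⟩
    rw [ipow, if_neg (by omega), neg_neg, Int.toNat_natCast, zpow_neg, zpow_natCast,
      ← Units.val_pow_eq_pow_val, eq_comm]
    exact (eq_inv_iff_mul_eq_one ((u ^ n).isUnit.map constantCoeff).ne_zero).mpr
      (Units.inv_mul _)

theorem sum_ichoose_smul_ipow (y z : ℚ⟦X⟧ˣ) {p δ : ℕ} (h : 2 * δ ≤ p + 1) (t : ℤ) :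
    ∑ k ∈ Finset.range (p - δ + 1),
        (((-1) ^ k * ichoose (p - k - δ) ((k : ℤ) - (δ : ℤ)) : ℤ) : ℚ) •
          (ipow y ((p : ℤ) - 2 * k) * ipow z (t - k))
      = (-1 : ℚ) ^ δ • (↑(z ^ (t - δ)) * lucasU (y : ℚ⟦X⟧) ↑z⁻¹ (p + 1 - 2 * δ)) := by
  rw [show p - δ + 1 = δ + (p + 1 - 2 * δ) by omega, Finset.sum_range_add, lucasU_eq_sum,
    Finset.mul_sum, Finset.smul_sum, Finset.sum_eq_zero, zero_add]
  · refine Finset.sum_congr rfl fun j hj => ?_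
    have hj := Finset.mem_range.mp hj
    have hchoose : ichoose (p - (δ + j) - δ) (((δ + j : ℕ) : ℤ) - δ)
        = (p + 1 - 2 * δ - 1 - j).choose j := by
      rw [ichoose, if_neg (by omega), show p - (δ + j) - δ = p + 1 - 2 * δ - 1 - j by omega]
      congr
      omega
    have hz : ipow z (t - (δ + j : ℕ)) = ↑(z ^ (t - δ)) * ↑z⁻¹ ^ j := by
      rw [ipow_coe_unit, ← Units.val_pow_eq_pow_val, ← Units.val_mul, ← zpow_natCast, inv_zpow',
        ← zpow_add]
      congr 2
      push_cast
      ring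
    rw [hchoose, hz]
    rcases le_or_gt (2 * (δ + j)) p with hle | hgt
    · rw [show (p : ℤ) - 2 * (δ + j : ℕ) = (p + 1 - 2 * δ - 1 - 2 * j : ℕ) by omega, ipow_natCast,
        Int.cast_smul_eq_zsmul, zsmul_eq_mul, smul_eq_C_mul]
      push_cast
      simp only [map_pow, map_neg, map_one]
      ring
    · rw [Nat.choose_eq_zero_of_lt (by omega)]
      simp
  · intro k hk
    rw [ichoose, if_pos (by simp at hk; omega)]
    simp

theorem stmt_17 (p s : ℕ) (hp : 1 ≤ p) (hs : 1 ≤ s) (δ : ℕ) (hδ : δ ≤ 1) :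
    PowerSeries.coeff (R := ℚ) (3 * s)
      (∑ k ∈ Finset.range (p - δ + 1),
        (((-1) ^ k * ichoose (p - k - δ) ((k : ℤ) - (δ : ℤ)) : ℤ) : ℚ) •
          (ipow (2 - PowerSeries.X) ((p : ℤ) - 2 * k) *
            ipow (1 + PowerSeries.X) ((s : ℤ) - k)))
      = (-1) ^ δ * (Nat.choose (s + p + 1 - 2 * δ) (3 * s + 1) : ℚ) := by
  obtain ⟨y, hy⟩ : IsUnit (2 - X : ℚ⟦X⟧) := isUnit_iff_constantCoeff.mpr (by simp [map_ofNat])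
  obtain ⟨z, hz⟩ : IsUnit (1 + X : ℚ⟦X⟧) := isUnit_iff_constantCoeff.mpr (by simp)
  have hzinv : (↑z⁻¹ : ℚ⟦X⟧) * (1 + X) = 1 := by rw [← hz, Units.inv_mul]
  rw [← hy, ← hz, sum_ichoose_smul_ipow y z (by omega) s, coeff_smul,
    show (s : ℤ) - δ = (s + 1 - δ - 1 : ℕ) by omega, zpow_natCast, Units.val_pow_eq_pow_val,
    hy, hz, coeff_one_add_X_pow_mul_lucasU hs (by omega) hzinv, smul_eq_mul,
    show p + 1 - 2 * δ + s = s + p + 1 - 2 * δ by omega]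
end
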